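/- arXiv:1307.3435 — 9 statements merged into one kernel-verified Lean document; each statement's English description precedes it below -/
import Mathlib

section
/- If a probability measure pr satisfies pr(ψ_b | ψ_a ∧ D) ≥ pr(ψ_b | D) for all individuals a, b (weak projectability), then for any finite set of individuals {1,...,n} and any individual a not determined by background D, pr(ψ_1 ∧ ... ∧ ψ_n | ψ_a ∧ D) ≥ pr(ψ_1 ∧ ... ∧ ψ_n | D). -/
open MeasureTheory ProbabilityTheory

lemma chain_aux {Ω : Type*} [MeasurableSpace Ω] (μ : Measure Ω) [IsProbabilityMeasure μ]
    (A B D : Set Ω) (hB : MeasurableSet B) (hD : MeasurableSet D)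
    (hBD : μ (B ∩ D) ≠ 0) :
    μ[A ∩ B | D] = μ[A | B ∩ D] * μ[B | D] := by
  rw [cond_apply hD, cond_apply (hB.inter hD), cond_apply hD]
  have h1 : D ∩ (A ∩ B) = B ∩ D ∩ A := by ext x; simp; tauto
  have h2 : D ∩ B = B ∩ D := Set.inter_comm _ _
  rw [h1, h2]
  have hne : μ (B ∩ D) ≠ ⊤ := measure_ne_top μ _
  calc (μ D)⁻¹ * μ (B ∩ D ∩ A)
      = (μ (B ∩ D))⁻¹ * μ (B ∩ D ∩ A) * ((μ D)⁻¹ * μ (B ∩ D)) := by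
        rw [show (μ (B ∩ D))⁻¹ * μ (B ∩ D ∩ A) * ((μ D)⁻¹ * μ (B ∩ D))
          = ((μ (B ∩ D))⁻¹ * μ (B ∩ D)) * ((μ D)⁻¹ * μ (B ∩ D ∩ A)) by ring,
          ENNReal.inv_mul_cancel hBD hne, one_mul]

/-- Group weak projectability follows from weak projectability.
If `pr(ψ_b | ψ_a ∧ D) ≥ pr(ψ_b | D)` for all individuals `a, b` and all admissible
(positive-probability) backgrounds `D`, then for any finite set `s` of individuals,
`pr(⋀_{i∈s} ψ_i | ψ_a ∧ D) ≥ pr(⋀_{i∈s} ψ_i | D)`. -/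
theorem group_weak_projectability {N : ℕ} {Ω : Type*} [MeasurableSpace Ω]
    (μ : Measure Ω) [IsProbabilityMeasure μ]
    (ψ : Fin N → Set Ω) (hψm : ∀ b, MeasurableSet (ψ b))
    -- weak projectability (PJ), for all individuals and all admissible backgrounds
    (hPJ : ∀ (a b : Fin N) (D : Set Ω), MeasurableSet D → μ D ≠ 0 → μ (ψ a ∩ D) ≠ 0 →
      μ[ψ b | ψ a ∩ D] ≥ μ[ψ b | D])
    (s : Finset (Fin N)) (a : Fin N) (D : Set Ω) (hDm : MeasurableSet D)
    (hD : μ D ≠ 0) (haD : μ (ψ a ∩ D) ≠ 0)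
    -- all relevant conjunctions have positive probability
    (hpos : ∀ t : Finset (Fin N),
      μ ((⋂ i ∈ t, ψ i) ∩ D) ≠ 0 ∧ μ ((⋂ i ∈ t, ψ i) ∩ (ψ a ∩ D)) ≠ 0) :
    μ[⋂ i ∈ s, ψ i | ψ a ∩ D] ≥ μ[⋂ i ∈ s, ψ i | D] := by
  induction s using Finset.induction_on with
  | empty =>
      simp only [Finset.notMem_empty, Set.iInter_of_empty, Set.iInter_univ]
      rw [cond_apply hDm, cond_apply ((hψm a).inter hDm), Set.inter_univ, Set.inter_univ,
        ENNReal.inv_mul_cancel hD (measure_ne_top μ _),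
        ENNReal.inv_mul_cancel haD (measure_ne_top μ _)]
  | @insert j s hj ih =>
      have hBm : MeasurableSet (⋂ i ∈ s, ψ i) :=
        Finset.measurableSet_biInter s (fun i _ => hψm i)
      rw [Finset.set_biInter_insert,
        chain_aux μ (ψ j) (⋂ i ∈ s, ψ i) D hBm hDm (hpos s).1,
        chain_aux μ (ψ j) (⋂ i ∈ s, ψ i) (ψ a ∩ D) hBm ((hψm a).inter hDm) (hpos s).2]
      refine mul_le_mul' ?_ ih
      have key := hPJ a j ((⋂ i ∈ s, ψ i) ∩ D) (hBm.inter hDm) (hpos s).1 ?_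
      · have hset : ψ a ∩ ((⋂ i ∈ s, ψ i) ∩ D) = (⋂ i ∈ s, ψ i) ∩ (ψ a ∩ D) := by
          ext x; simp; tauto
        rwa [hset] at key
      · have hset : ψ a ∩ ((⋂ i ∈ s, ψ i) ∩ D) = (⋂ i ∈ s, ψ i) ∩ (ψ a ∩ D) := by
          ext x; simp; tauto
        rw [hset]; exact (hpos s).2
end

section
/- Assume weak projectability holds for the predicate G. Let D := F_1 ∧ ... ∧ F_k ∧ ¬F_{k+1} ∧ ... ∧ ¬F_N, with 1 ≤ k ≤ N, and assume D does not entail G_k (i.e., 0 < pr(G_k | D) < 1). Then pr(H | G_k ∧ D) > pr(H | D), where H := ∀b (F_b → G_b). That is, observing that a known F-object is G strictly confirms the hypothesis that all F are G. -/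
open MeasureTheory ProbabilityTheory

/-- Complete description vectors: each individual is assigned whether it is `F`
(first component) and whether it is `G` (second component). -/
abbrev CDV (N : ℕ) := Fin N → Bool × Bool

/-- The event that individual `b` satisfies `F`. -/
def Fev {N : ℕ} (b : Fin N) : Set (CDV N) := {ω | (ω b).1 = true}

/-- The event that individual `b` satisfies `G`. -/
def Gev {N : ℕ} (b : Fin N) : Set (CDV N) := {ω | (ω b).2 = true}

/-- The hypothesis `H`: every individual satisfying `F` also satisfies `G`. -/
def Hyp (N : ℕ) : Set (CDV N) := {ω | ∀ b : Fin N, (ω b).1 = true → (ω b).2 = true}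

/-- The twelve single-individual predicates allowed in the class `Δ`
(`F`, `¬F`, `G`, `¬G`, the complete descriptions `F̄Ḡ`, `F̄G`, `FḠ`, `FG`,
their relevant negations including `F→G = ¬FḠ`), together with the trivial
predicate (for undescribed individuals). -/
def allowedPreds : Set (Set (Bool × Bool)) :=
  { Set.univ,
    {p | p.1 = true}, {p | p.1 = false},
    {p | p.2 = true}, {p | p.2 = false},
    {p | p.1 = false ∧ p.2 = false}, {p | ¬(p.1 = false ∧ p.2 = false)},
    {p | p.1 = false ∧ p.2 = true}, {p | ¬(p.1 = false ∧ p.2 = true)},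
    {p | p.1 = true ∧ p.2 = false},
    {p | p.1 = true → p.2 = true},
    {p | p.1 = true ∧ p.2 = true}, {p | ¬(p.1 = true ∧ p.2 = true)} }

/-- The class `Δ` of admissible backgrounds: conjunctions of allowed
single-individual predicates, each about a distinct individual
(hence not linking properties of distinct individuals). -/
def IsDelta {N : ℕ} (D : Set (CDV N)) : Prop :=
  ∃ A : Fin N → Set (Bool × Bool),
    (∀ b, A b ∈ allowedPreds) ∧ D = {ω | ∀ b, ω b ∈ A b}

/-!
Since `D` entails `F_i`, the hypothesis `H` entails `G_i` on `D`, so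
`pr(H | G_i ∧ D) = pr(H | D) / pr(G_i | D)`. This exceeds `pr(H | D)` because
`pr(H | D) > 0` (Cournot: `H ∧ D` is consistent) and `pr(G_i | D) < 1`.
-/

namespace ProbabilityTheory

variable {Ω : Type*} [MeasurableSpace Ω] {μ : Measure Ω} [IsFiniteMeasure μ] {s t : Set Ω}

lemma measure_inter_lt_of_cond_lt_one (hs : MeasurableSet s) (hs₀ : μ s ≠ 0)
    (h : μ[t | s] < 1) : μ (s ∩ t) < μ s := by
  refine (measure_mono Set.inter_subset_left).lt_of_ne fun heq => h.ne ?_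
  rw [cond_apply hs, heq, ENNReal.inv_mul_cancel hs₀ (measure_ne_top μ s)]

lemma cond_lt_cond_inter_of_inter_subset {h e : Set Ω} (hs : MeasurableSet s)
    (he : MeasurableSet e) (hsub : h ∩ s ⊆ e) (hpos : μ (h ∩ s) ≠ 0) (hlt : μ[e | s] < 1) :
    μ[h | s] < μ[h | e ∩ s] := by
  have hes : e ∩ s ∩ h = h ∩ s := by
    ext ω
    exact ⟨fun hω => ⟨hω.2, hω.1.2⟩, fun hω => ⟨⟨hsub hω, hω.2⟩, hω.1⟩⟩
  rw [cond_apply hs, cond_apply (he.inter hs), hes, Set.inter_comm s h,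
    ENNReal.mul_lt_mul_iff_left hpos (measure_ne_top μ _), ENNReal.inv_lt_inv, Set.inter_comm e s]
  exact measure_inter_lt_of_cond_lt_one hs
    (fun hs₀ => hpos (measure_mono_null Set.inter_subset_right hs₀)) hlt

end ProbabilityTheory

lemma Hyp_inter_Fev_subset_Gev {N : ℕ} (i : Fin N) : Hyp N ∩ Fev i ⊆ Gev i :=
  fun _ hω => hω.1 i hω.2

lemma Hyp_inter_setOf_fst_iff_nonempty {N : ℕ} (p : Fin N → Prop) :
    (Hyp N ∩ {ω : CDV N | ∀ b, ((ω b).1 = true ↔ p b)}).Nonempty := by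
  classical
  exact ⟨fun b => (decide (p b), true), fun _ _ => rfl, fun b => decide_eq_true_iff⟩

theorem confirmation_by_Gk_general {N k : ℕ} (hk1 : 1 ≤ k)
    (μ : Measure (CDV N)) [IsProbabilityMeasure μ]
    -- Cournot's principle: contingent events have positive probability
    (hCournot : ∀ s : Set (CDV N), s.Nonempty → μ s ≠ 0)
    (D : Set (CDV N)) (hD : D = {ω | ∀ b : Fin N, ((ω b).1 = true ↔ (b : ℕ) < k)})
    (i : Fin N) (hi : (i : ℕ) = k - 1)
    -- D does not entail G_k
    (hnd : 0 < μ[Gev i | D] ∧ μ[Gev i | D] < 1) :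
    μ[Hyp N | Gev i ∩ D] > μ[Hyp N | D] := by
  have hDF : D ⊆ Fev i := by
    intro ω hω
    rw [hD] at hω
    exact (hω i).2 (by omega)
  have hHD : (Hyp N ∩ D).Nonempty := hD ▸ Hyp_inter_setOf_fst_iff_nonempty _
  exact cond_lt_cond_inter_of_inter_subset (Set.toFinite D).measurableSet
    (Set.toFinite (Gev i)).measurableSet
    ((Set.inter_subset_inter_right _ hDF).trans (Hyp_inter_Fev_subset_Gev i))
    (hCournot _ hHD) hnd.2

/-- Under weak projectability for `G`, with background
`D := F_1 ∧ ... ∧ F_k ∧ ¬F_{k+1} ∧ ... ∧ ¬F_N` (1 ≤ k ≤ N) not determining `G_k`,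
the evidence `G_k` strictly confirms `H`. -/
theorem confirmation_by_Gk {N k : ℕ} (hk1 : 1 ≤ k) (hk2 : k ≤ N)
    (μ : Measure (CDV N)) [IsProbabilityMeasure μ]
    -- weak projectability (PJ) for the predicate G
    (hPJ : ∀ (a b : Fin N) (B : Set (CDV N)), IsDelta B → μ B ≠ 0 → μ (Gev a ∩ B) ≠ 0 →
      μ[Gev b | Gev a ∩ B] ≥ μ[Gev b | B])
    -- Cournot's principle: contingent events have positive probability
    (hCournot : ∀ s : Set (CDV N), s.Nonempty → μ s ≠ 0)
    (D : Set (CDV N)) (hD : D = {ω | ∀ b : Fin N, ((ω b).1 = true ↔ (b : ℕ) < k)})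
    (i : Fin N) (hi : (i : ℕ) = k - 1)
    -- D does not entail G_k
    (hnd : 0 < μ[Gev i | D] ∧ μ[Gev i | D] < 1) :
    μ[Hyp N | Gev i ∩ D] > μ[Hyp N | D] :=
  confirmation_by_Gk_general hk1 μ hCournot D hD i hi hnd
end

section
/- Assume weak projectability holds for the predicate G. Let D := F_1 ∧ ... ∧ F_k ∧ ¬F_{k+1} ∧ ... ∧ ¬F_N with 1 ≤ k < N. Then pr(H | G_N ∧ D) ≥ pr(H | D), where H := ∀b (F_b → G_b). That is, observing that a known non-F object is G does not disconfirm the hypothesis. -/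
open MeasureTheory ProbabilityTheory

lemma cross_of_inv {x y u v : ENNReal} (hx0 : x ≠ 0) (hx : x ≠ ⊤) (hy0 : y ≠ 0) (hy : y ≠ ⊤)
    (h : y⁻¹ * v ≤ x⁻¹ * u) : v * x ≤ u * y := by
  have h2 := mul_le_mul_left h (x * y)
  have e1 : x⁻¹ * u * (x * y) = u * y * (x⁻¹ * x) := by ring
  have e2 : y⁻¹ * v * (x * y) = v * x * (y⁻¹ * y) := by ring
  rwa [e1, e2, ENNReal.inv_mul_cancel hx0 hx, ENNReal.inv_mul_cancel hy0 hy, mul_one, mul_one] at h2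

lemma inv_of_cross {x y u v : ENNReal} (hx0 : x ≠ 0) (hx : x ≠ ⊤) (hy0 : y ≠ 0) (hy : y ≠ ⊤)
    (h : v * x ≤ u * y) : y⁻¹ * v ≤ x⁻¹ * u := by
  have h2 := mul_le_mul_left h (x⁻¹ * y⁻¹)
  have e1 : u * y * (x⁻¹ * y⁻¹) = x⁻¹ * u * (y⁻¹ * y) := by ring
  have e2 : v * x * (x⁻¹ * y⁻¹) = y⁻¹ * v * (x⁻¹ * x) := by ring
  rwa [e1, e2, ENNReal.inv_mul_cancel hx0 hx, ENNReal.inv_mul_cancel hy0 hy, mul_one, mul_one] at h2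

/-- Under weak projectability for `G`, with background
`D := F_1 ∧ ... ∧ F_k ∧ ¬F_{k+1} ∧ ... ∧ ¬F_N` (1 ≤ k < N), observing that the
known non-F object `N` is `G` does not disconfirm `H`. -/
theorem no_disconfirmation_by_GN {N k : ℕ} (hk1 : 1 ≤ k) (hk2 : k < N)
    (μ : Measure (CDV N)) [IsProbabilityMeasure μ]
    -- weak projectability (PJ) for the predicate G
    (hPJ : ∀ (a b : Fin N) (B : Set (CDV N)), IsDelta B → μ B ≠ 0 → μ (Gev a ∩ B) ≠ 0 →
      μ[Gev b | Gev a ∩ B] ≥ μ[Gev b | B])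
    -- all conditioning events have positive probability
    (hCournot : ∀ s : Set (CDV N), s.Nonempty → μ s ≠ 0)
    (D : Set (CDV N)) (hD : D = {ω | ∀ b : Fin N, ((ω b).1 = true ↔ (b : ℕ) < k)})
    (j : Fin N) (hj : (j : ℕ) = N - 1) :
    μ[Hyp N | Gev j ∩ D] ≥ μ[Hyp N | D] := by
  classical
  set S : ℕ → Set (CDV N) := fun i => {ω | ∀ b : Fin N, (b : ℕ) < i → (ω b).2 = true} with hS
  -- a common witness
  have hwit : ∀ (i : ℕ), (Gev j ∩ (D ∩ S i)).Nonempty := by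
    intro i
    refine ⟨fun b => (decide ((b : ℕ) < k), true), ?_, ?_, ?_⟩
    · simp [Gev]
    · simp [hD]
    · intro b _; rfl
  have hwit' : ∀ (i : ℕ), (D ∩ S i).Nonempty := fun i => ((hwit i).mono Set.inter_subset_right)
  have hne : ∀ (i : ℕ), μ (D ∩ S i) ≠ 0 := fun i => hCournot _ (hwit' i)
  have hneG : ∀ (i : ℕ), μ (Gev j ∩ (D ∩ S i)) ≠ 0 := fun i => hCournot _ (hwit i)
  have hfin : ∀ s : Set (CDV N), μ s ≠ ⊤ := fun s => measure_ne_top μ s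
  have hms : ∀ s : Set (CDV N), MeasurableSet s := fun s => (Set.to_countable s).measurableSet
  -- D ∩ S i is an admissible background (for i ≤ k)
  have hdelta : ∀ i : ℕ, i ≤ k → IsDelta (D ∩ S i) := by
    intro i hik
    refine ⟨fun b => if (b : ℕ) < i then {p | p.1 = true ∧ p.2 = true}
      else if (b : ℕ) < k then {p | p.1 = true} else {p | p.1 = false}, ?_, ?_⟩
    · intro b
      dsimp only
      split_ifs <;> simp [allowedPreds]
    · ext ω
      simp only [hD, hS, Set.mem_inter_iff, Set.mem_setOf_eq]
      constructor
      · rintro ⟨h1, h2⟩ b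
        by_cases hc1 : (b : ℕ) < i
        · rw [if_pos hc1]
          exact ⟨(h1 b).mpr (lt_of_lt_of_le hc1 hik), h2 b hc1⟩
        · rw [if_neg hc1]
          by_cases hc2 : (b : ℕ) < k
          · rw [if_pos hc2]; exact (h1 b).mpr hc2
          · rw [if_neg hc2]
            simp only [Set.mem_setOf_eq]
            cases hb : (ω b).1
            · rfl
            · exact absurd ((h1 b).mp hb) hc2
      · intro h
        constructor
        · intro b
          have hb := h b
          by_cases hc1 : (b : ℕ) < i
          · rw [if_pos hc1] at hb
            exact ⟨fun _ => lt_of_lt_of_le hc1 hik, fun _ => hb.1⟩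
          · rw [if_neg hc1] at hb
            by_cases hc2 : (b : ℕ) < k
            · rw [if_pos hc2] at hb; exact ⟨fun _ => hc2, fun _ => hb⟩
            · rw [if_neg hc2] at hb
              simp only [Set.mem_setOf_eq] at hb
              constructor
              · intro hbt; rw [hb] at hbt; exact absurd hbt (by simp)
              · intro hk'; exact absurd hk' hc2
        · intro b hbi
          have hb := h b
          rw [if_pos hbi] at hb
          exact hb.2
  -- the step decomposition of S
  have Sfact : ∀ i : ℕ, ∀ hiN : i < N, S (i + 1) = S i ∩ Gev ⟨i, hiN⟩ := by
    intro i hiN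
    ext ω
    simp only [hS, Set.mem_inter_iff, Set.mem_setOf_eq, Gev]
    constructor
    · intro h
      exact ⟨fun b hb => h b (by omega), h ⟨i, hiN⟩ (by simp)⟩
    · rintro ⟨h1, h2⟩ b hb
      rcases Nat.lt_succ_iff_lt_or_eq.mp hb with hb' | hb'
      · exact h1 b hb'
      · have : b = ⟨i, hiN⟩ := Fin.ext hb'
        rw [this]; exact h2
  -- main induction
  have main : ∀ i : ℕ, i ≤ k →
      μ (D ∩ S i) * μ (Gev j ∩ D) ≤ μ (Gev j ∩ (D ∩ S i)) * μ D := by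
    intro i
    induction i with
    | zero =>
      intro _
      have h0 : S 0 = Set.univ := by
        ext ω; simp [hS]
      rw [h0, Set.inter_univ, mul_comm]
    | succ i ih =>
      intro hik
      have hik' : i ≤ k := by omega
      have hiN : i < N := by omega
      have hstep := hPJ j ⟨i, hiN⟩ (D ∩ S i) (hdelta i hik') (hne i) (hneG i)
      rw [cond_apply (hms _), cond_apply (hms _)] at hstep
      have hcross := cross_of_inv (hneG i) (hfin _) (hne i) (hfin _) hstep
      have hset : D ∩ S (i + 1) = (D ∩ S i) ∩ Gev ⟨i, hiN⟩ := by
        rw [Sfact i hiN, Set.inter_assoc]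
      have hsetG : Gev j ∩ (D ∩ S (i + 1)) = (Gev j ∩ (D ∩ S i)) ∩ Gev ⟨i, hiN⟩ := by
        rw [Sfact i hiN]
        ext ω
        simp only [Set.mem_inter_iff]
        tauto
      rw [← hset, ← hsetG] at hcross
      -- hcross : μ (D ∩ S (i+1)) * μ (Gev j ∩ (D ∩ S i)) ≤ μ (Gev j ∩ (D ∩ S (i+1))) * μ (D ∩ S i)
      have hmul := mul_le_mul' hcross (ih hik')
      have e1 : μ (D ∩ S (i + 1)) * μ (Gev j ∩ (D ∩ S i)) * (μ (D ∩ S i) * μ (Gev j ∩ D))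
          = μ (D ∩ S (i + 1)) * μ (Gev j ∩ D) * (μ (Gev j ∩ (D ∩ S i)) * μ (D ∩ S i)) := by ring
      have e2 : μ (Gev j ∩ (D ∩ S (i + 1))) * μ (D ∩ S i) * (μ (Gev j ∩ (D ∩ S i)) * μ D)
          = μ (Gev j ∩ (D ∩ S (i + 1))) * μ D * (μ (Gev j ∩ (D ∩ S i)) * μ (D ∩ S i)) := by ring
      rw [e1, e2] at hmul
      exact (ENNReal.mul_le_mul_iff_left (mul_ne_zero (hneG i) (hne i))
        (ENNReal.mul_ne_top (hfin _) (hfin _))).mp hmul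
  -- identify Hyp with S k on D
  have Hfact : D ∩ Hyp N = D ∩ S k := by
    ext ω
    simp only [hD, hS, Set.mem_inter_iff, Set.mem_setOf_eq, Hyp]
    constructor
    · rintro ⟨h1, h2⟩
      exact ⟨h1, fun b hb => h2 b ((h1 b).mpr hb)⟩
    · rintro ⟨h1, h2⟩
      exact ⟨h1, fun b hb => h2 b ((h1 b).mp hb)⟩
  have hkey := main k le_rfl
  rw [ge_iff_le, cond_apply (hms D), cond_apply (hms (Gev j ∩ D))]
  have hDne : μ D ≠ 0 := by
    have := hne 0
    have h0 : S 0 = Set.univ := by ext ω; simp [hS]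
    rwa [h0, Set.inter_univ] at this
  have hGDne : μ (Gev j ∩ D) ≠ 0 := by
    have := hneG 0
    have h0 : S 0 = Set.univ := by ext ω; simp [hS]
    rwa [h0, Set.inter_univ] at this
  apply inv_of_cross hGDne (hfin _) hDne (hfin _)
  have hs1 : D ∩ Hyp N = D ∩ S k := Hfact
  have hs2 : (Gev j ∩ D) ∩ Hyp N = Gev j ∩ (D ∩ S k) := by
    rw [Set.inter_assoc, Hfact]
  rw [hs1, hs2]
  exact hkey
end

section
/- Assume weak projectability holds for the predicate G. Let D := F_1 ∧ ... ∧ F_k ∧ ¬F_{k+1} ∧ ... ∧ ¬F_N with 1 ≤ k < N. Then pr(H | ¬G_N ∧ D) ≤ pr(H | D), where H := ∀b (F_b → G_b). That is, observing that a known non-F object is not G does not confirm the hypothesis. -/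
open MeasureTheory ProbabilityTheory

/-- Chain rule for conditional probability on a countable discrete space. -/
lemma cond_chain {Ω : Type*} [MeasurableSpace Ω] [Countable Ω] [MeasurableSingletonClass Ω]
    (μ : MeasureTheory.Measure Ω) [MeasureTheory.IsProbabilityMeasure μ] (s t u : Set Ω)
    (htu : μ (t ∩ u) ≠ 0) :
    μ[t ∩ s | u] = μ[s | t ∩ u] * μ[t | u] := by
  rw [cond_apply (u.to_countable.measurableSet), cond_apply ((t ∩ u).to_countable.measurableSet),
    cond_apply (u.to_countable.measurableSet)]
  have h1 : u ∩ (t ∩ s) = t ∩ u ∩ s := by ext ω; simp [Set.mem_inter_iff]; tauto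
  have h2 : u ∩ t = t ∩ u := Set.inter_comm _ _
  rw [h1, h2]
  have hfin : μ (t ∩ u) ≠ ⊤ := MeasureTheory.measure_ne_top μ _
  calc (μ u)⁻¹ * μ (t ∩ u ∩ s)
      = (μ u)⁻¹ * μ (t ∩ u ∩ s) * ((μ (t ∩ u))⁻¹ * μ (t ∩ u)) := by
        rw [ENNReal.inv_mul_cancel htu hfin, mul_one]
    _ = (μ (t ∩ u))⁻¹ * μ (t ∩ u ∩ s) * ((μ u)⁻¹ * μ (t ∩ u)) := by ring

/-- Under weak projectability for `G` (including its entailed negative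
form), with background `D := F_1 ∧ ... ∧ F_k ∧ ¬F_{k+1} ∧ ... ∧ ¬F_N` (1 ≤ k < N),
observing that the known non-F object `N` is not `G` does not confirm `H`. -/
theorem no_confirmation_by_notGN {N k : ℕ} (hk1 : 1 ≤ k) (hk2 : k < N)
    (μ : Measure (CDV N)) [IsProbabilityMeasure μ]
    -- weak projectability (PJ) for the predicate G
    (hPJ : ∀ (a b : Fin N) (B : Set (CDV N)), IsDelta B → μ B ≠ 0 → μ (Gev a ∩ B) ≠ 0 →
      μ[Gev b | Gev a ∩ B] ≥ μ[Gev b | B])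
    -- the entailed negative form of PJ for G
    (hPJneg : ∀ (a b : Fin N) (B : Set (CDV N)), IsDelta B → μ B ≠ 0 →
      μ ((Gev a)ᶜ ∩ B) ≠ 0 →
      μ[Gev b | (Gev a)ᶜ ∩ B] ≤ μ[Gev b | B])
    -- all conditioning events have positive probability
    (hCournot : ∀ s : Set (CDV N), s.Nonempty → μ s ≠ 0)
    (D : Set (CDV N)) (hD : D = {ω | ∀ b : Fin N, ((ω b).1 = true ↔ (b : ℕ) < k)})
    (j : Fin N) (hj : (j : ℕ) = N - 1) :
    μ[Hyp N | (Gev j)ᶜ ∩ D] ≤ μ[Hyp N | D] := by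
  classical
  have hm : ∀ s : Set (CDV N), MeasurableSet s := fun s => s.to_countable.measurableSet
  set T : ℕ → Set (CDV N) := fun i => {ω | ∀ b : Fin N, (b : ℕ) < i → (ω b).2 = true} with hT
  -- witness: everything G
  have hw1 : ∀ i : ℕ, (fun b : Fin N => ((decide ((b : ℕ) < k)), true)) ∈ T i ∩ D := by
    intro i
    refine ⟨fun b _ => rfl, ?_⟩
    rw [hD]; intro b; simp
  -- witness: everything G except individual N-1
  have hw2 : ∀ i : ℕ, i ≤ k →
      (fun b : Fin N => ((decide ((b : ℕ) < k)), decide ((b : ℕ) ≠ N - 1)))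
        ∈ T i ∩ ((Gev j)ᶜ ∩ D) := by
    intro i hik
    refine ⟨?_, ?_, ?_⟩
    · intro b hb
      simp only [decide_eq_true_iff]
      omega
    · simp [Gev, hj]
    · rw [hD]; intro b; simp
  have hDne : μ D ≠ 0 := hCournot _ ⟨_, (hw1 0).2⟩
  have hGDne : μ ((Gev j)ᶜ ∩ D) ≠ 0 := hCournot _ ⟨_, (hw2 0 (by omega)).2⟩
  -- T i ∩ D is an admissible background
  have hDelta : ∀ i : ℕ, i ≤ k → IsDelta (T i ∩ D) := by
    intro i hik
    refine ⟨fun b => if (b : ℕ) < i then {p | p.1 = true ∧ p.2 = true}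
      else if (b : ℕ) < k then {p | p.1 = true} else {p | p.1 = false}, ?_, ?_⟩
    · intro b
      by_cases h1 : (b : ℕ) < i <;> by_cases h2 : (b : ℕ) < k <;>
        simp only [h1, h2, if_true, if_false, allowedPreds, Set.mem_insert_iff,
          Set.mem_singleton_iff] <;> tauto
    · rw [hD]; ext ω
      simp only [Set.mem_inter_iff, Set.mem_setOf_eq, hT]
      constructor
      · rintro ⟨h1, h2⟩ b
        by_cases hb : (b : ℕ) < i
        · simp only [hb, if_true, Set.mem_setOf_eq]
          exact ⟨(h2 b).mpr (lt_of_lt_of_le hb hik), h1 b hb⟩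
        · by_cases hb2 : (b : ℕ) < k
          · simp only [hb, hb2, if_true, if_false, Set.mem_setOf_eq]
            exact (h2 b).mpr hb2
          · simp only [hb, hb2, if_false, Set.mem_setOf_eq]
            cases hv : (ω b).1
            · rfl
            · exact absurd ((h2 b).mp hv) hb2
      · intro h
        constructor
        · intro b hb
          have := h b
          simp only [hb, if_true, Set.mem_setOf_eq] at this
          exact this.2
        · intro b
          have := h b
          by_cases hb : (b : ℕ) < i
          · simp only [hb, if_true, Set.mem_setOf_eq] at this
            simp [this.1, lt_of_lt_of_le hb hik]
          · by_cases hb2 : (b : ℕ) < k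
            · simp only [hb, hb2, if_true, if_false, Set.mem_setOf_eq] at this
              simp [this, hb2]
            · simp only [hb, hb2, if_false, Set.mem_setOf_eq] at this
              simp [this, hb2]
  -- on any subset of D, the hypothesis H coincides with T k
  have hHyp : ∀ u : Set (CDV N), u ⊆ D → μ[Hyp N | u] = μ[T k | u] := by
    intro u hu
    rw [cond_apply (hm u), cond_apply (hm u)]
    have hset : u ∩ Hyp N = u ∩ T k := by
      ext ω
      simp only [Set.mem_inter_iff, Hyp, Set.mem_setOf_eq, hT]
      constructor
      · rintro ⟨h1, h2⟩
        refine ⟨h1, fun b hb => h2 b ?_⟩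
        have := hu h1; rw [hD] at this
        exact (this b).mpr hb
      · rintro ⟨h1, h2⟩
        refine ⟨h1, fun b hb => h2 b ?_⟩
        have := hu h1; rw [hD] at this
        exact (this b).mp hb
    rw [hset]
  -- key induction
  have key : ∀ i : ℕ, i ≤ k → μ[T i | (Gev j)ᶜ ∩ D] ≤ μ[T i | D] := by
    intro i
    induction i with
    | zero =>
      intro _
      have h0 : T 0 = Set.univ := by ext ω; simp [hT]
      rw [h0, cond_apply (hm _), cond_apply (hm _), Set.inter_univ, Set.inter_univ,
        ENNReal.inv_mul_cancel hGDne (MeasureTheory.measure_ne_top μ _),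
        ENNReal.inv_mul_cancel hDne (MeasureTheory.measure_ne_top μ _)]
    | succ i ih =>
      intro hik
      have hik' : i ≤ k := Nat.le_of_succ_le hik
      set bi : Fin N := ⟨i, by omega⟩ with hbi
      have hTsucc : T (i + 1) = T i ∩ Gev bi := by
        ext ω
        simp only [hT, Gev, Set.mem_inter_iff, Set.mem_setOf_eq]
        constructor
        · intro h
          exact ⟨fun b hb => h b (by omega), h bi (Nat.lt_succ_self i)⟩
        · rintro ⟨h1, h2⟩ b hb
          rcases Nat.lt_succ_iff_lt_or_eq.mp hb with h | h
          · exact h1 b h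
          · have : b = bi := Fin.ext h
            rw [this]; exact h2
      have hne1 : μ (T i ∩ D) ≠ 0 := hCournot _ ⟨_, hw1 i⟩
      have hne2 : μ (T i ∩ ((Gev j)ᶜ ∩ D)) ≠ 0 := hCournot _ ⟨_, hw2 i hik'⟩
      rw [hTsucc, cond_chain μ (Gev bi) (T i) D hne1,
        cond_chain μ (Gev bi) (T i) ((Gev j)ᶜ ∩ D) hne2]
      refine mul_le_mul' ?_ (ih hik')
      have hcomm : T i ∩ ((Gev j)ᶜ ∩ D) = (Gev j)ᶜ ∩ (T i ∩ D) := by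
        ext ω; simp only [Set.mem_inter_iff]; tauto
      rw [hcomm]
      exact hPJneg j bi (T i ∩ D) (hDelta i hik') hne1
        (hCournot _ ⟨_, hcomm ▸ hw2 i hik'⟩)
  rw [hHyp _ Set.inter_subset_right, hHyp D (subset_refl D)]
  exact key k le_rfl
end

section
/- Let D be background knowledge that completely describes a set of individuals without falsifying H, and let {b_1,...,b_n, a} be the individuals not described by D. Then Nicod's condition pr(H | FG_a ∧ D) > pr(H | D) holds if and only if Ξ_1 · Ξ_2 > 1, where Ξ_1 := pr(F→G_{b_1} ∧ ... ∧ F→G_{b_n} | FG_a ∧ D) / pr(F→G_{b_1} ∧ ... ∧ F→G_{b_n} | D) and Ξ_2 := 1 / pr(F→G_a | F→G_{b_1} ∧ ... ∧ F→G_{b_n} ∧ D). -/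
open MeasureTheory ProbabilityTheory
open scoped ENNReal

/-- Lemma on Ξ₁ and Ξ₂: for background `D ∈ δ` completely describing the
individuals in `T` without falsifying `H`, and `{b_1, ..., b_n, a}` the individuals
outside `T`, Nicod's condition `pr(H | FG_a ∧ D) > pr(H | D)` holds iff `Ξ₁ · Ξ₂ > 1`,
where `Ξ₁ = pr(F→G_{b_1} ∧ ... ∧ F→G_{b_n} | FG_a ∧ D) / pr(F→G_{b_1} ∧ ... ∧ F→G_{b_n} | D)`
and `Ξ₂ = 1 / pr(F→G_a | F→G_{b_1} ∧ ... ∧ F→G_{b_n} ∧ D)`. -/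
theorem nicod_iff_xi_product_gt_one {N : ℕ}
    (μ : Measure (CDV N)) [IsProbabilityMeasure μ]
    -- Cournot's principle: contingent events have positive probability
    (hCournot : ∀ s : Set (CDV N), s.Nonempty → μ s ≠ 0)
    (T : Finset (Fin N)) (d : Fin N → Bool × Bool)
    -- D completely describes the individuals of T and does not falsify H
    (hd : ∀ c ∈ T, d c ≠ (true, false))
    (D : Set (CDV N)) (hD : D = {ω | ∀ c ∈ T, ω c = d c})
    (a : Fin N) (ha : a ∉ T)
    -- R is the conjunction of F→G over the undescribed individuals other than a
    (R : Set (CDV N))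
    (hR : R = {ω | ∀ b : Fin N, b ∉ T → b ≠ a → ((ω b).1 = true → (ω b).2 = true)}) :
    μ[Hyp N | (Fev a ∩ Gev a) ∩ D] > μ[Hyp N | D] ↔
      ((μ[R | (Fev a ∩ Gev a) ∩ D]).toReal / (μ[R | D]).toReal) *
        (1 / (μ[{ω : CDV N | (ω a).1 = true → (ω a).2 = true} | R ∩ D]).toReal) > 1 := by
  set Arr : Set (CDV N) := {ω : CDV N | (ω a).1 = true → (ω a).2 = true} with hArr
  set FGa : Set (CDV N) := Fev a ∩ Gev a with hFGa
  -- witness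
  set ω0 : CDV N := fun c => if c ∈ T then d c else (true, true) with hω0
  have hω0D : ω0 ∈ D := by
    rw [hD]; intro c hc; simp [hω0, hc]
  have hω0R : ω0 ∈ R := by
    rw [hR]; intro b hb _ _; simp [hω0, hb]
  have hω0FGa : ω0 ∈ FGa := by
    constructor <;> simp [Fev, Gev, hω0, ha]
  have hω0Arr : ω0 ∈ Arr := by intro h; simp [hω0, ha]
  -- measurability
  have meas : ∀ s : Set (CDV N), MeasurableSet s := fun s => by measurability
  -- positivity
  have hDpos : μ D ≠ 0 := hCournot D ⟨ω0, hω0D⟩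
  have hFGaDpos : μ (FGa ∩ D) ≠ 0 := hCournot _ ⟨ω0, ⟨hω0FGa, hω0D⟩⟩
  have hRDpos : μ (R ∩ D) ≠ 0 := hCournot _ ⟨ω0, ⟨hω0R, hω0D⟩⟩
  -- finiteness
  have fin : ∀ s : Set (CDV N), μ s ≠ ⊤ := fun s => measure_ne_top μ s
  -- key set identities
  have hDb : ∀ ω : CDV N, ω ∈ D → ∀ b ∈ T, ((ω b).1 = true → (ω b).2 = true) := by
    intro ω hω b hb hb1
    rw [hD] at hω
    have := hω b hb
    have hdb := hd b hb
    rcases h2 : d b with ⟨x, y⟩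
    rw [h2] at this hdb
    rw [this] at hb1 ⊢
    simp at hb1
    cases y
    · exact absurd (by rw [hb1]) hdb
    · rfl
  have key : ∀ ω : CDV N, ω ∈ D → (ω ∈ Hyp N ↔ (ω ∈ R ∧ ω ∈ Arr)) := by
    intro ω hω
    constructor
    · intro h
      refine ⟨?_, h a⟩
      rw [hR]; intro b _ _; exact h b
    · rintro ⟨h1, h2⟩ b hb1
      by_cases hbT : b ∈ T
      · exact hDb ω hω b hbT hb1
      · by_cases hba : b = a
        · subst hba; exact h2 hb1
        · rw [hR] at h1; exact h1 b hbT hba hb1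
  have id1 : (FGa ∩ D) ∩ Hyp N = (FGa ∩ D) ∩ R := by
    ext ω
    simp only [Set.mem_inter_iff, and_congr_right_iff]
    rintro ⟨hf, hdd⟩
    rw [key ω hdd]
    have : ω ∈ Arr := fun _ => hf.2
    tauto
  have id2 : D ∩ Hyp N = D ∩ (R ∩ Arr) := by
    ext ω
    simp only [Set.mem_inter_iff, and_congr_right_iff]
    intro hdd
    exact key ω hdd
  -- rewrite conditionals
  rw [cond_apply (meas _) μ, cond_apply (meas _) μ, cond_apply (meas _) μ,
    cond_apply (meas _) μ, cond_apply (meas _) μ, id1, id2]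
  -- abbreviations as reals
  have hRDA : (R ∩ D) ∩ Arr = D ∩ (R ∩ Arr) := by
    rw [Set.inter_comm R D, Set.inter_assoc]
  rw [hRDA]
  set x : ℝ≥0∞ := (μ (FGa ∩ D))⁻¹ * μ ((FGa ∩ D) ∩ R) with hx
  have hxt : x ≠ ⊤ := ENNReal.mul_ne_top (ENNReal.inv_ne_top.2 hFGaDpos) (fin _)
  have hyt : (μ D)⁻¹ * μ (D ∩ (R ∩ Arr)) ≠ ⊤ :=
    ENNReal.mul_ne_top (ENNReal.inv_ne_top.2 hDpos) (fin _)
  rw [gt_iff_lt, ← ENNReal.toReal_lt_toReal hyt hxt]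
  -- now pure real arithmetic
  have hDr : (μ D).toReal > 0 := ENNReal.toReal_pos hDpos (fin _)
  have hRDr : (μ (R ∩ D)).toReal > 0 := ENNReal.toReal_pos hRDpos (fin _)
  rw [ENNReal.toReal_mul, ENNReal.toReal_mul, ENNReal.toReal_mul, ENNReal.toReal_mul,
    ENNReal.toReal_inv, ENNReal.toReal_inv, ENNReal.toReal_inv]
  set A := (μ ((FGa ∩ D) ∩ R)).toReal
  set B := (μ (D ∩ R)).toReal
  set C := (μ (D ∩ (R ∩ Arr))).toReal
  set P := (μ (FGa ∩ D)).toReal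
  set Q := (μ D).toReal
  set S := (μ (R ∩ D)).toReal
  have hBS : B = S := congrArg (fun s => (μ s).toReal) (Set.inter_comm D R)
  have hPpos : P > 0 := ENNReal.toReal_pos hFGaDpos (fin _)
  have hCpos : C > 0 := ENNReal.toReal_pos
    (hCournot _ ⟨ω0, hω0D, hω0R, hω0Arr⟩) (fin _)
  have hBpos : B > 0 := by rw [hBS]; exact hRDr
  rw [hBS]
  rw [gt_iff_lt, div_mul_div_comm, mul_one, lt_div_iff₀
    (mul_pos (mul_pos (inv_pos.2 hDr) hRDr) (mul_pos (inv_pos.2 hRDr) hCpos)), one_mul]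
  constructor
  · intro h
    calc Q⁻¹ * S * (S⁻¹ * C) = Q⁻¹ * C := by
          field_simp
        _ < P⁻¹ * A := h
  · intro h
    calc Q⁻¹ * C = Q⁻¹ * S * (S⁻¹ * C) := by field_simp
      _ < P⁻¹ * A := h
end

section
/- Suppose the probability measure satisfies: for every admissible background B and all distinct individuals a, b not mentioned in B, pr(F_b ∧ ¬G_b | F_a ∧ G_a ∧ B) ≤ pr(F_b ∧ ¬G_b | B). Then for every background D consisting of complete descriptions of some individuals that do not falsify H, and every individual a not described by D (with D not determining F_a ∧ G_a or H), Nicod's condition holds: pr(H | F_a ∧ G_a ∧ D) > pr(H | D). -/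
open MeasureTheory ProbabilityTheory

/-- The class `Δ` restricted to backgrounds mentioning only the individuals in `S`. -/
def IsDeltaOn {N : ℕ} (S : Finset (Fin N)) (B : Set (CDV N)) : Prop :=
  ∃ A : Fin N → Set (Bool × Bool),
    (∀ b, A b ∈ allowedPreds) ∧ (∀ b ∉ S, A b = Set.univ) ∧ B = {ω | ∀ b, ω b ∈ A b}

/-!
Let `E` be the conjunction of the instances `F_b → G_b` of `H` over the individuals `b` that are
neither described by `D` nor equal to `a`. Given `F_a ∧ G_a ∧ D`, `H` is equivalent to `E`; given
`D`, it is equivalent to `E ∧ (F_a → G_a)`, which by Cournot's principle is strictly less probable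
than `E`. By the chain rule `pr(E | ·)` is the product of the factors `pr(F_c → G_c | · ∧ E')`,
`E'` a partial conjunction of `E`; since `D ∧ E'` is an admissible background, relation (9) read
through complements says that adding `F_a ∧ G_a` to the condition does not decrease any factor.
-/

namespace ProbabilityTheory

variable {Ω ι : Type*} [MeasurableSpace Ω]

lemma prob_le_of_prob_compl_le {ν ν' : Measure Ω} [IsProbabilityMeasure ν]
    [IsProbabilityMeasure ν'] {s : Set Ω} (hs : MeasurableSet s) (h : ν sᶜ ≤ ν' sᶜ) :
    ν' s ≤ ν s := by
  rw [prob_compl_eq_one_sub hs, prob_compl_eq_one_sub hs] at h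
  calc ν' s = 1 - (1 - ν' s) := (ENNReal.sub_sub_cancel ENNReal.one_ne_top prob_le_one).symm
    _ ≤ 1 - (1 - ν s) := tsub_le_tsub_left h 1
    _ = ν s := ENNReal.sub_sub_cancel ENNReal.one_ne_top prob_le_one

lemma measure_biInter_le_of_cond_le {ν ν' : Measure Ω} [IsFiniteMeasure ν] [IsFiniteMeasure ν']
    {e : ι → Set Ω} (he : ∀ i, MeasurableSet (e i)) (W : Finset ι)
    (huniv : ν Set.univ ≤ ν' Set.univ)
    (hstep : ∀ c ∈ W, ∀ W' ⊆ W, c ∉ W' →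
      ν[e c | ⋂ i ∈ W', e i] ≤ ν'[e c | ⋂ i ∈ W', e i]) :
    ν (⋂ i ∈ W, e i) ≤ ν' (⋂ i ∈ W, e i) := by
  classical
  induction W using Finset.induction_on with
  | empty => simpa using huniv
  | @insert c W hc ih =>
    have hE : MeasurableSet (⋂ i ∈ W, e i) := Finset.measurableSet_biInter W fun i _ => he i
    rw [Finset.set_biInter_insert, Set.inter_comm, ← cond_mul_eq_inter hE, ← cond_mul_eq_inter hE]
    exact mul_le_mul' (hstep c (Finset.mem_insert_self _ _) W (Finset.subset_insert _ _) hc)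
      (ih fun c' hc' W' hW' =>
        hstep c' (Finset.mem_insert_of_mem hc') W' (hW'.trans (Finset.subset_insert _ _)))

lemma cond_inter_of_subset {μ : Measure Ω} {X s : Set Ω} (hX : MeasurableSet X) (hXs : X ⊆ s)
    (t : Set Ω) : μ[s ∩ t | X] = μ[t | X] := by
  rw [cond_apply hX, cond_apply hX, ← Set.inter_assoc, Set.inter_eq_left.2 hXs]

lemma cond_inter_lt_cond {μ : Measure Ω} [IsFiniteMeasure μ] {X s t : Set Ω}
    (hX : MeasurableSet X) (ht : MeasurableSet t) (h : μ (X ∩ (s \ t)) ≠ 0) :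
    μ[t ∩ s | X] < μ[s | X] := by
  have hdiff : μ[s \ t | X] ≠ 0 := by
    rw [cond_apply hX]
    exact mul_ne_zero (ENNReal.inv_ne_zero.2 (measure_ne_top μ X)) h
  rw [← measure_inter_add_sdiff s ht, Set.inter_comm]
  exact ENNReal.lt_add_right (measure_ne_top _ _) hdiff

end ProbabilityTheory

section
variable {N : ℕ}

def hypAt (b : Fin N) : Set (CDV N) := {ω | (ω b).1 = true → (ω b).2 = true}

def hypOn (S : Finset (Fin N)) : Set (CDV N) := ⋂ b ∈ S, hypAt b

def describedBy (T : Finset (Fin N)) (d : Fin N → Bool × Bool) : Set (CDV N) :=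
  {ω | ∀ c ∈ T, ω c = d c}

lemma mem_hypAt_iff {ω : CDV N} {b : Fin N} : ω ∈ hypAt b ↔ ω b ≠ (true, false) := by
  simp [hypAt, Prod.ext_iff]

lemma mem_hyp_iff {ω : CDV N} : ω ∈ Hyp N ↔ ∀ b, ω b ≠ (true, false) := by
  simp [Hyp, Prod.ext_iff]

lemma compl_hypAt (b : Fin N) : (hypAt b)ᶜ = Fev b ∩ (Gev b)ᶜ := by
  ext ω; simp [hypAt, Fev, Gev]

lemma hyp_eq_hypOn_inter_hypOn_compl (S : Finset (Fin N)) :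
    Hyp N = hypOn S ∩ hypOn Sᶜ := by
  ext ω
  simp only [Hyp, hypOn, hypAt, Set.mem_inter_iff, Set.mem_iInter, Set.mem_ofPred_eq,
    Finset.mem_compl]
  exact ⟨fun h => ⟨fun b _ => h b, fun b _ => h b⟩,
    fun h b => if hb : b ∈ S then h.1 b hb else h.2 b hb⟩

lemma hyp_subset_hypOn (S : Finset (Fin N)) : Hyp N ⊆ hypOn S :=
  fun _ h => Set.mem_iInter₂.2 fun b _ => h b

lemma hypOn_anti {S S' : Finset (Fin N)} (h : S' ⊆ S) : hypOn S ⊆ hypOn S' :=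
  Set.biInter_subset_biInter_left (Finset.coe_subset.2 h)

lemma hypOn_insert (a : Fin N) (S : Finset (Fin N)) :
    hypOn (insert a S) = hypAt a ∩ hypOn S :=
  Finset.set_biInter_insert a S hypAt

lemma fev_inter_gev_subset_hypAt (a : Fin N) : Fev a ∩ Gev a ⊆ hypAt a :=
  fun _ h _ => h.2

lemma describedBy_subset_hypOn {T : Finset (Fin N)} {d : Fin N → Bool × Bool}
    (hd : ∀ c ∈ T, d c ≠ (true, false)) : describedBy T d ⊆ hypOn T :=
  fun _ hω => Set.mem_iInter₂.2 fun c hc => mem_hypAt_iff.2 (hω c hc ▸ hd c hc)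

lemma singleton_mem_allowedPreds (p : Bool × Bool) : {p} ∈ allowedPreds := by
  rcases p with ⟨_ | _, _ | _⟩ <;> simp [allowedPreds, Set.ext_iff, Prod.ext_iff]

lemma isDeltaOn_describedBy_inter_hypOn {T W : Finset (Fin N)} (d : Fin N → Bool × Bool)
    (hTW : Disjoint T W) : IsDeltaOn (T ∪ W) (describedBy T d ∩ hypOn W) := by
  refine ⟨fun b => if b ∈ T then {d b} else if b ∈ W then {p | p.1 = true → p.2 = true}
    else Set.univ, fun b => ?_, fun b hb => ?_, ?_⟩
  · dsimp only
    split_ifs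
    · exact singleton_mem_allowedPreds _
    · simp [allowedPreds]
    · simp [allowedPreds]
  · simp_all
  · ext ω
    simp only [describedBy, hypOn, hypAt, Set.mem_inter_iff, Set.mem_iInter, Set.mem_ofPred_eq]
    constructor
    · rintro ⟨hT, hW⟩ b
      split_ifs with hbT hbW
      exacts [hT b hbT, hW b hbW, trivial]
    · intro h
      refine ⟨fun c hc => by simpa [hc] using h c, fun b hb => ?_⟩
      simpa [Finset.disjoint_right.mp hTW hb, hb] using h b

def NonconfirmationOfCounterexamples (μ : Measure (CDV N)) : Prop :=
  ∀ (S : Finset (Fin N)) (B : Set (CDV N)) (a b : Fin N),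
    IsDeltaOn S B → a ∉ S → b ∉ S → a ≠ b →
    μ[Fev b ∩ (Gev b)ᶜ | (Fev a ∩ Gev a) ∩ B] ≤ μ[Fev b ∩ (Gev b)ᶜ | B]

lemma NonconfirmationOfCounterexamples.cond_hypAt_le {μ : Measure (CDV N)} [IsFiniteMeasure μ]
    (h : NonconfirmationOfCounterexamples μ) {S : Finset (Fin N)} {B : Set (CDV N)}
    {a c : Fin N} (hB : IsDeltaOn S B) (ha : a ∉ S) (hc : c ∉ S) (hac : a ≠ c)
    (hpos : μ (Fev a ∩ Gev a ∩ B) ≠ 0) :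
    μ[hypAt c | B] ≤ μ[hypAt c | Fev a ∩ Gev a ∩ B] := by
  have := cond_isProbabilityMeasure hpos
  have := cond_isProbabilityMeasure (measure_mono_null Set.inter_subset_right |>.mt hpos)
  refine prob_le_of_prob_compl_le .of_discrete ?_
  rw [compl_hypAt]
  exact h S B a c hB ha hc hac

lemma NonconfirmationOfCounterexamples.cond_hypOn_le {μ : Measure (CDV N)} [IsFiniteMeasure μ]
    (h : NonconfirmationOfCounterexamples μ) {T W : Finset (Fin N)} (d : Fin N → Bool × Bool)
    {a : Fin N} (hTW : Disjoint T W) (haT : a ∉ T) (haW : a ∉ W)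
    (hpos : μ (Fev a ∩ Gev a ∩ describedBy T d ∩ hypOn W) ≠ 0) :
    μ[hypOn W | describedBy T d] ≤ μ[hypOn W | Fev a ∩ Gev a ∩ describedBy T d] := by
  have hX : μ (Fev a ∩ Gev a ∩ describedBy T d) ≠ 0 :=
    measure_mono_null Set.inter_subset_left |>.mt hpos
  have := cond_isProbabilityMeasure hX
  have := cond_isProbabilityMeasure (measure_mono_null Set.inter_subset_right |>.mt hX)
  refine measure_biInter_le_of_cond_le (fun _ => .of_discrete) W (by simp)
    fun c hc W' hW' hcW' => ?_
  rw [cond_cond_eq_cond_inter .of_discrete .of_discrete,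
    cond_cond_eq_cond_inter .of_discrete .of_discrete, Set.inter_assoc]
  refine h.cond_hypAt_le (isDeltaOn_describedBy_inter_hypOn d (hTW.mono_right hW'))
    ?_ ?_ ?_ (measure_mono_null ?_ |>.mt hpos)
  · simpa [haT] using fun haW' => haW (hW' haW')
  · simpa [Finset.disjoint_right.mp hTW hc] using hcW'
  · rintro rfl
    exact haW hc
  · rw [← Set.inter_assoc]
    exact Set.inter_subset_inter_right _ (hypOn_anti hW')

lemma nonempty_fev_inter_gev_inter_describedBy_inter_hyp {T : Finset (Fin N)}
    {d : Fin N → Bool × Bool} (hd : ∀ c ∈ T, d c ≠ (true, false)) {a : Fin N} (ha : a ∉ T) :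
    (Fev a ∩ Gev a ∩ describedBy T d ∩ Hyp N).Nonempty := by
  set ω : CDV N := fun b => if b ∈ T then d b else (true, true)
  refine ⟨ω, ⟨⟨?_, ?_⟩, fun c hc => ?_⟩, mem_hyp_iff.2 fun b => ?_⟩
  · simp [ω, Fev, ha]
  · simp [ω, Gev, ha]
  · simp [ω, hc]
  · by_cases hb : b ∈ T <;> simp [ω, hb, hd]

lemma nonempty_describedBy_inter_hypOn_diff_hypAt {T : Finset (Fin N)} (d : Fin N → Bool × Bool)
    {a : Fin N} (ha : a ∉ T) :
    (describedBy T d ∩ (hypOn (insert a T)ᶜ \ hypAt a)).Nonempty := by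
  refine ⟨fun b => if b ∈ T then d b else if b = a then (true, false) else (true, true),
    fun c hc => by simp [hc], Set.mem_iInter₂.2 fun b hb => mem_hypAt_iff.2 ?_, ?_⟩
  · simp only [Finset.mem_compl, Finset.mem_insert, not_or] at hb
    simp [hb.1, hb.2]
  · simp [mem_hypAt_iff, ha]

end

/-- Theorem 1: if `pr(F_b ∧ ¬G_b | F_a ∧ G_a ∧ B) ≤ pr(F_b ∧ ¬G_b | B)` for
every admissible background `B` and all distinct individuals `a, b` not mentioned in `B`,
then Nicod's condition holds relative to every background `D ∈ δ` (a conjunction of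
complete descriptions not falsifying `H`) and every individual `a` not described by `D`. -/
theorem nicod_of_nonconfirmation_of_counterexamples {N : ℕ}
    (μ : Measure (CDV N)) [IsProbabilityMeasure μ]
    -- Cournot's principle: contingent events have positive probability
    (hCournot : ∀ s : Set (CDV N), s.Nonempty → μ s ≠ 0)
    -- relation (9): FG_a does not confirm F¬G_b for unmentioned individuals
    (hyp : ∀ (S : Finset (Fin N)) (B : Set (CDV N)) (a b : Fin N),
      IsDeltaOn S B → a ∉ S → b ∉ S → a ≠ b →
      μ[Fev b ∩ (Gev b)ᶜ | (Fev a ∩ Gev a) ∩ B] ≤ μ[Fev b ∩ (Gev b)ᶜ | B])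
    (T : Finset (Fin N)) (d : Fin N → Bool × Bool)
    -- D ∈ δ completely describes the individuals of T and does not falsify H
    (hd : ∀ c ∈ T, d c ≠ (true, false))
    (D : Set (CDV N)) (hD : D = {ω | ∀ c ∈ T, ω c = d c})
    (a : Fin N) (ha : a ∉ T) :
    μ[Hyp N | (Fev a ∩ Gev a) ∩ D] > μ[Hyp N | D] := by
  obtain rfl : D = describedBy T d := hD
  have hHyp : Hyp N = hypOn T ∩ (hypAt a ∩ hypOn (insert a T)ᶜ) := by
    rw [hyp_eq_hypOn_inter_hypOn_compl (insert a T), hypOn_insert, Set.inter_assoc,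
      Set.inter_left_comm]
  obtain ⟨ω₀, hω₀, hω₀H⟩ := nonempty_fev_inter_gev_inter_describedBy_inter_hyp hd ha
  calc μ[Hyp N | describedBy T d]
      = μ[hypAt a ∩ hypOn (insert a T)ᶜ | describedBy T d] := by
        rw [hHyp, cond_inter_of_subset .of_discrete (describedBy_subset_hypOn hd)]
    _ < μ[hypOn (insert a T)ᶜ | describedBy T d] :=
        cond_inter_lt_cond .of_discrete .of_discrete
          (hCournot _ (nonempty_describedBy_inter_hypOn_diff_hypAt d ha))
    _ ≤ μ[hypOn (insert a T)ᶜ | Fev a ∩ Gev a ∩ describedBy T d] :=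
        NonconfirmationOfCounterexamples.cond_hypOn_le hyp d
          (disjoint_compl_right_iff.2 (Finset.subset_insert a T)) ha (by simp)
          (hCournot _ ⟨ω₀, hω₀, hyp_subset_hypOn _ hω₀H⟩)
    _ = μ[Hyp N | Fev a ∩ Gev a ∩ describedBy T d] := by
        rw [hHyp, cond_inter_of_subset .of_discrete
            (Set.inter_subset_right.trans (describedBy_subset_hypOn hd)),
          cond_inter_of_subset .of_discrete
            (Set.inter_subset_left.trans (fev_inter_gev_subset_hypAt a))]
end

section
/- Suppose the probability measure satisfies: (i) for every admissible background B and distinct a, b not mentioned in B, pr(F_b ∧ ¬G_b | F_a ∧ G_a ∧ B) > pr(F_b ∧ ¬G_b | B); and (ii) pr(¬(F→G)_a | F→G_{b_1} ∧ ... ∧ F→G_{b_n} ∧ D) < pr(F_{b_1} ∧ ¬G_{b_1} | F_a∧G_a ∧ D) − pr(F_{b_1} ∧ ¬G_{b_1} | D), where b_1,...,b_n, a enumerate all individuals not described by D. Then Nicod's condition fails: pr(H | F_a ∧ G_a ∧ D) ≤ pr(H | D). -/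
open MeasureTheory ProbabilityTheory

namespace NicodAux

variable {N : ℕ}

noncomputable def pc (μ : Measure (CDV N)) (s t : Set (CDV N)) : ℝ :=
  ((μ t).toReal)⁻¹ * (μ (t ∩ s)).toReal

lemma cond_toReal (μ : Measure (CDV N)) (s t : Set (CDV N)) :
    (μ[s|t]).toReal = pc μ s t := by
  rw [ProbabilityTheory.cond_apply (t.toFinite.measurableSet), ENNReal.toReal_mul,
    ENNReal.toReal_inv, pc]

lemma cond_ne_top (μ : Measure (CDV N)) [IsProbabilityMeasure μ] (s t : Set (CDV N)) :
    μ[s|t] ≠ ⊤ := by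
  rw [ProbabilityTheory.cond_apply (t.toFinite.measurableSet)]
  by_cases h : μ t = 0
  · have h0 : μ (t ∩ s) = 0 := measure_mono_null Set.inter_subset_left h
    simp [h0]
  · exact ENNReal.mul_ne_top (ENNReal.inv_ne_top.mpr h) (measure_ne_top μ _)

set_option linter.unusedSectionVars false
variable (μ : Measure (CDV N)) [IsProbabilityMeasure μ]

lemma m_zero {s : Set (CDV N)} (h : (μ s).toReal = 0) : μ s = 0 := by
  rcases (ENNReal.toReal_eq_zero_iff _).mp h with h | h
  · exact h
  · exact absurd h (measure_ne_top μ s)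

lemma m_mono {s t : Set (CDV N)} (h : s ⊆ t) : (μ s).toReal ≤ (μ t).toReal :=
  (ENNReal.toReal_le_toReal (measure_ne_top μ s) (measure_ne_top μ t)).mpr (measure_mono h)

lemma m_ne_zero {s : Set (CDV N)} (h : μ s ≠ 0) : (μ s).toReal ≠ 0 :=
  ENNReal.toReal_ne_zero.mpr ⟨h, measure_ne_top μ s⟩

lemma pc_nonneg (s t : Set (CDV N)) : 0 ≤ pc μ s t :=
  mul_nonneg (inv_nonneg.mpr ENNReal.toReal_nonneg) ENNReal.toReal_nonneg

lemma pc_le_one (s t : Set (CDV N)) : pc μ s t ≤ 1 := by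
  unfold pc
  rcases eq_or_ne ((μ t).toReal) 0 with h | h
  · simp [h]
  · have hpos : 0 < (μ t).toReal := lt_of_le_of_ne ENNReal.toReal_nonneg (Ne.symm h)
    rw [inv_mul_le_iff₀ hpos, mul_one]
    exact m_mono μ Set.inter_subset_left

lemma pc_univ {t : Set (CDV N)} (h : μ t ≠ 0) : pc μ Set.univ t = 1 := by
  unfold pc
  rw [Set.inter_univ, inv_mul_cancel₀ (m_ne_zero μ h)]

lemma pc_compl {t : Set (CDV N)} (h : μ t ≠ 0) (s : Set (CDV N)) :
    pc μ sᶜ t = 1 - pc μ s t := by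
  unfold pc
  have hsum : (μ (t ∩ s)).toReal + (μ (t ∩ sᶜ)).toReal = (μ t).toReal := by
    rw [← ENNReal.toReal_add (measure_ne_top μ _) (measure_ne_top μ _)]
    congr 1
    rw [← Set.diff_eq]
    exact measure_inter_add_diff t s.toFinite.measurableSet
  have hne := m_ne_zero μ h
  field_simp
  linarith

lemma pc_chain (E F t : Set (CDV N)) :
    pc μ (F ∩ E) t = pc μ E (t ∩ F) * pc μ F t := by
  unfold pc
  rw [show t ∩ (F ∩ E) = (t ∩ F) ∩ E from (Set.inter_assoc t F E).symm]
  rcases eq_or_ne ((μ (t ∩ F)).toReal) 0 with hc | hc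
  · have hx : μ ((t ∩ F) ∩ E) = 0 := measure_mono_null Set.inter_subset_left (m_zero μ hc)
    simp [hc, hx]
  · field_simp


def Imp {N : ℕ} (b : Fin N) : Set (CDV N) := {ω | (ω b).1 = true → (ω b).2 = true}

def RS {N : ℕ} (S : Finset (Fin N)) : Set (CDV N) :=
  {ω | ∀ b ∈ S, (ω b).1 = true → (ω b).2 = true}

lemma RS_empty : RS (∅ : Finset (Fin N)) = Set.univ := by
  ext ω; simp [RS]

lemma RS_insert [DecidableEq (Fin N)] (b : Fin N) (S : Finset (Fin N)) :
    RS (insert b S) = Imp b ∩ RS S := by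
  ext ω; simp [RS, Imp, Set.mem_inter_iff, Finset.forall_mem_insert]

lemma RS_singleton (b : Fin N) : RS ({b} : Finset (Fin N)) = Imp b := by
  ext ω; simp [RS, Imp]

lemma Imp_eq_compl (b : Fin N) : Imp b = (Fev b ∩ (Gev b)ᶜ)ᶜ := by
  ext ω; simp [Imp, Fev, Gev]

lemma allowed_nonempty {s : Set (Bool × Bool)} (hs : s ∈ allowedPreds) : s.Nonempty := by
  simp only [allowedPreds, Set.mem_insert_iff, Set.mem_singleton_iff] at hs
  rcases hs with rfl|rfl|rfl|rfl|rfl|rfl|rfl|rfl|rfl|rfl|rfl|rfl|rfl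
  · exact ⟨(false, false), trivial⟩
  · exact ⟨(true, false), by simp⟩
  · exact ⟨(false, false), by simp⟩
  · exact ⟨(false, true), by simp⟩
  · exact ⟨(false, false), by simp⟩
  · exact ⟨(false, false), by simp⟩
  · exact ⟨(true, true), by simp⟩
  · exact ⟨(false, true), by simp⟩
  · exact ⟨(true, true), by simp⟩
  · exact ⟨(true, false), by simp⟩
  · exact ⟨(false, false), by simp⟩
  · exact ⟨(true, true), by simp⟩
  · exact ⟨(false, false), by simp⟩

lemma delta_nonempty {S₀ : Finset (Fin N)} {B : Set (CDV N)} (hB : IsDeltaOn S₀ B) :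
    B.Nonempty := by
  obtain ⟨A, hA, -, rfl⟩ := hB
  choose f hf using fun b => allowed_nonempty (hA b)
  exact ⟨f, fun b => hf b⟩

lemma delta_fg_nonempty [DecidableEq (Fin N)] {S₀ : Finset (Fin N)} {B : Set (CDV N)}
    (hB : IsDeltaOn S₀ B) {a : Fin N} (ha : a ∉ S₀) :
    ((Fev a ∩ Gev a) ∩ B).Nonempty := by
  obtain ⟨A, hA, hU, rfl⟩ := hB
  choose f hf using fun b => allowed_nonempty (hA b)
  refine ⟨Function.update f a (true, true), ⟨?_, ?_⟩, ?_⟩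
  · simp [Fev, Function.update_self]
  · simp [Gev, Function.update_self]
  · intro b
    rcases eq_or_ne b a with rfl | hba
    · rw [hU b ha]; trivial
    · rw [Function.update_of_ne hba]; exact hf b

lemma isDeltaOn_inter_RS [DecidableEq (Fin N)] {S₀ S : Finset (Fin N)} {B : Set (CDV N)}
    (hB : IsDeltaOn S₀ B) (hS : ∀ b ∈ S, b ∉ S₀) :
    IsDeltaOn (S₀ ∪ S) (B ∩ RS S) := by
  obtain ⟨A, hA, hU, rfl⟩ := hB
  refine ⟨fun c => if c ∈ S then {p | p.1 = true → p.2 = true} else A c, ?_, ?_, ?_⟩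
  · intro b
    by_cases hb : b ∈ S
    · simp only [if_pos hb]
      simp [allowedPreds]
    · simpa only [if_neg hb] using hA b
  · intro b hb
    rw [Finset.mem_union, not_or] at hb
    simp only [if_neg hb.2]
    exact hU b hb.1
  · ext ω
    simp only [Set.mem_inter_iff, Set.mem_setOf_eq, RS]
    constructor
    · rintro ⟨h1, h2⟩ b
      by_cases hb : b ∈ S
      · simp only [if_pos hb]; exact h2 b hb
      · simp only [if_neg hb]; exact h1 b
    · intro h
      constructor
      · intro b
        by_cases hb : b ∈ S
        · rw [hU b (hS b hb)]; trivial
        · have := h b; simp only [if_neg hb] at this; exact this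
      · intro b hb
        have := h b; simp only [if_pos hb] at this; exact this


lemma claim [DecidableEq (Fin N)]
    (hC : ∀ s : Set (CDV N), s.Nonempty → μ s ≠ 0)
    (hyp1 : ∀ (S : Finset (Fin N)) (B : Set (CDV N)) (a b : Fin N),
      IsDeltaOn S B → a ∉ S → b ∉ S → a ≠ b →
      μ[Fev b ∩ (Gev b)ᶜ | (Fev a ∩ Gev a) ∩ B] > μ[Fev b ∩ (Gev b)ᶜ | B])
    (S : Finset (Fin N)) :
    ∀ (S₀ : Finset (Fin N)) (B : Set (CDV N)) (a : Fin N),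
      IsDeltaOn S₀ B → a ∉ S₀ → (∀ b ∈ S, b ∉ S₀) → a ∉ S →
      pc μ (RS S) ((Fev a ∩ Gev a) ∩ B) ≤ pc μ (RS S) B := by
  induction S using Finset.induction_on with
  | empty =>
    intro S₀ B a hB haS₀ _ _
    rw [RS_empty, pc_univ μ (hC _ (delta_fg_nonempty hB haS₀)),
      pc_univ μ (hC _ (delta_nonempty hB))]
  | @insert b S' hbS' ih =>
    intro S₀ B a hB haS₀ hS ha
    have hbS₀ : b ∉ S₀ := hS b (Finset.mem_insert_self b S')
    have hS'' : ∀ c ∈ S', c ∉ S₀ := fun c hc => hS c (Finset.mem_insert_of_mem hc)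
    have haS' : a ∉ S' := fun h => ha (Finset.mem_insert_of_mem h)
    have hab : a ≠ b := fun h => ha (h ▸ Finset.mem_insert_self b S')
    have hB' : IsDeltaOn (S₀ ∪ S') (B ∩ RS S') := isDeltaOn_inter_RS hB hS''
    have haB' : a ∉ S₀ ∪ S' := by simp [haS₀, haS']
    have hbB' : b ∉ S₀ ∪ S' := by simp [hbS₀, hbS']
    have h1 := hyp1 (S₀ ∪ S') (B ∩ RS S') a b hB' haB' hbB' hab
    have h1r : pc μ (Fev b ∩ (Gev b)ᶜ) (B ∩ RS S')
        < pc μ (Fev b ∩ (Gev b)ᶜ) ((Fev a ∩ Gev a) ∩ (B ∩ RS S')) := by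
      rw [← cond_toReal, ← cond_toReal]
      exact (ENNReal.toReal_lt_toReal (cond_ne_top μ _ _) (cond_ne_top μ _ _)).mpr h1
    have hne1 : μ (B ∩ RS S') ≠ 0 := hC _ (delta_nonempty hB')
    have hne2 : μ ((Fev a ∩ Gev a) ∩ (B ∩ RS S')) ≠ 0 := hC _ (delta_fg_nonempty hB' haB')
    have f1 : pc μ (Imp b) ((Fev a ∩ Gev a) ∩ (B ∩ RS S')) ≤ pc μ (Imp b) (B ∩ RS S') := by
      rw [Imp_eq_compl, pc_compl μ hne2, pc_compl μ hne1]
      linarith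
    rw [RS_insert, Set.inter_comm (Imp b) (RS S'), pc_chain, pc_chain,
      Set.inter_assoc (Fev a ∩ Gev a) B (RS S')]
    exact mul_le_mul f1 (ih S₀ B a hB haS₀ hS'' haS') (pc_nonneg μ _ _) (pc_nonneg μ _ _)

end NicodAux

/-- Theorem 2: if (i) `pr(F_b ∧ ¬G_b | F_a ∧ G_a ∧ B) > pr(F_b ∧ ¬G_b | B)`
for every admissible background `B` and distinct `a, b` not mentioned in `B`, and (ii)
`pr(¬(F→G)_a | F→G_{b_1} ∧ ... ∧ F→G_{b_n} ∧ D) <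
 pr(F_{b_1} ∧ ¬G_{b_1} | F_a ∧ G_a ∧ D) − pr(F_{b_1} ∧ ¬G_{b_1} | D)`,
where `b_1, ..., b_n, a` enumerate the individuals not described by `D ∈ δ`,
then Nicod's condition fails. -/
theorem not_nicod_of_confirmation_of_counterexamples {N : ℕ}
    (μ : Measure (CDV N)) [IsProbabilityMeasure μ]
    -- Cournot's principle: contingent events have positive probability
    (hCournot : ∀ s : Set (CDV N), s.Nonempty → μ s ≠ 0)
    -- condition (i): FG_a confirms F¬G_b for unmentioned individuals
    (hyp1 : ∀ (S : Finset (Fin N)) (B : Set (CDV N)) (a b : Fin N),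
      IsDeltaOn S B → a ∉ S → b ∉ S → a ≠ b →
      μ[Fev b ∩ (Gev b)ᶜ | (Fev a ∩ Gev a) ∩ B] > μ[Fev b ∩ (Gev b)ᶜ | B])
    (T : Finset (Fin N)) (d : Fin N → Bool × Bool)
    -- D ∈ δ completely describes the individuals of T and does not falsify H
    (hd : ∀ c ∈ T, d c ≠ (true, false))
    (D : Set (CDV N)) (hD : D = {ω | ∀ c ∈ T, ω c = d c})
    (a : Fin N) (ha : a ∉ T)
    (b₁ : Fin N) (hb₁ : b₁ ∉ T) (hb₁a : b₁ ≠ a)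
    -- R is the conjunction of F→G over the undescribed individuals other than a
    (R : Set (CDV N))
    (hR : R = {ω | ∀ b : Fin N, b ∉ T → b ≠ a → ((ω b).1 = true → (ω b).2 = true)})
    -- condition (ii)
    (hyp2 : (μ[(Fev a ∩ (Gev a)ᶜ) | R ∩ D]).toReal <
      (μ[Fev b₁ ∩ (Gev b₁)ᶜ | (Fev a ∩ Gev a) ∩ D]).toReal -
        (μ[Fev b₁ ∩ (Gev b₁)ᶜ | D]).toReal) :
    μ[Hyp N | (Fev a ∩ Gev a) ∩ D] ≤ μ[Hyp N | D] := by
  classical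
  open NicodAux in
  subst hD
  subst hR
  set D : Set (CDV N) := {ω | ∀ c ∈ T, ω c = d c} with hDdef
  set R : Set (CDV N) :=
    {ω | ∀ b : Fin N, b ∉ T → b ≠ a → ((ω b).1 = true → (ω b).2 = true)} with hRdef
  -- D is an admissible background on T
  have hDdelta : IsDeltaOn T D := by
    refine ⟨fun c => if c ∈ T then {p | p.1 = (d c).1 ∧ p.2 = (d c).2} else Set.univ,
      ?_, ?_, ?_⟩
    · intro c
      by_cases hc : c ∈ T
      · simp only [if_pos hc]
        have hne := hd c hc
        cases h1 : (d c).1 <;> cases h2 : (d c).2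
        · simp [allowedPreds]
        · simp [allowedPreds]
        · exact absurd (Prod.ext h1 h2) hne
        · simp [allowedPreds]
      · simp only [if_neg hc]
        simp [allowedPreds]
    · intro c hc
      simp only [if_neg hc]
    · ext ω
      simp only [hDdef, Set.mem_setOf_eq]
      constructor
      · intro h c
        by_cases hc : c ∈ T
        · simp only [if_pos hc, Set.mem_setOf_eq]
          exact ⟨by rw [h c hc], by rw [h c hc]⟩
        · simp only [if_neg hc]
          trivial
      · intro h c hc
        have := h c
        simp only [if_pos hc, Set.mem_setOf_eq] at this
        exact Prod.ext this.1 this.2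
  have hmD : μ D ≠ 0 := hCournot D (delta_nonempty hDdelta)
  have hmFGD : μ ((Fev a ∩ Gev a) ∩ D) ≠ 0 := hCournot _ (delta_fg_nonempty hDdelta ha)
  -- the real-valued δ is positive
  have hδpos : 0 < pc μ (Fev b₁ ∩ (Gev b₁)ᶜ) ((Fev a ∩ Gev a) ∩ D)
      - pc μ (Fev b₁ ∩ (Gev b₁)ᶜ) D := by
    have h := (ENNReal.toReal_lt_toReal (cond_ne_top μ _ _) (cond_ne_top μ _ _)).mpr
      (hyp1 T D a b₁ hDdelta ha hb₁ (Ne.symm hb₁a))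
    rw [cond_toReal, cond_toReal] at h
    linarith
  -- hypothesis (ii) in real form
  have hyp2' : pc μ (Fev a ∩ (Gev a)ᶜ) (R ∩ D) <
      pc μ (Fev b₁ ∩ (Gev b₁)ᶜ) ((Fev a ∩ Gev a) ∩ D)
      - pc μ (Fev b₁ ∩ (Gev b₁)ᶜ) D := by
    rw [cond_toReal, cond_toReal, cond_toReal] at hyp2
    exact hyp2
  -- the undescribed individuals other than a
  set Sf : Finset (Fin N) := Finset.univ.filter (fun b : Fin N => b ∉ T ∧ b ≠ a)
    with hSfdef
  have hRSf : R = RS Sf := by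
    ext ω
    simp [hRdef, RS, hSfdef, Finset.mem_filter, and_imp]
  have hb₁Sf : b₁ ∈ Sf := by simp [hSfdef, hb₁, hb₁a]
  set S' := Sf.erase b₁ with hS'def
  have hins : insert b₁ S' = Sf := Finset.insert_erase hb₁Sf
  have hDb1 : IsDeltaOn (T ∪ {b₁}) (D ∩ Imp b₁) := by
    have h := isDeltaOn_inter_RS (S := {b₁}) hDdelta
      (by intro c hc; rw [Finset.mem_singleton] at hc; subst hc; exact hb₁)
    rwa [RS_singleton] at h
  have haTb1 : a ∉ T ∪ {b₁} := by
    simp only [Finset.mem_union, Finset.mem_singleton, not_or]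
    exact ⟨ha, Ne.symm hb₁a⟩
  have hS'T : ∀ c ∈ S', c ∉ T ∪ {b₁} := by
    intro c hc
    have h1 : c ∈ Sf := Finset.mem_of_mem_erase hc
    have h2 : c ≠ b₁ := Finset.ne_of_mem_erase hc
    simp only [hSfdef, Finset.mem_filter] at h1
    simp only [Finset.mem_union, Finset.mem_singleton, not_or]
    exact ⟨h1.2.1, h2⟩
  have haS' : a ∉ S' := by
    intro h
    have h1 : a ∈ Sf := Finset.mem_of_mem_erase h
    simp [hSfdef] at h1
  have hclaim := claim μ hCournot hyp1 S' (T ∪ {b₁}) (D ∩ Imp b₁) a hDb1 haTb1 hS'T haS'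
  -- the margin inequality
  have key : pc μ R ((Fev a ∩ Gev a) ∩ D) ≤ pc μ R D -
      (pc μ (Fev b₁ ∩ (Gev b₁)ᶜ) ((Fev a ∩ Gev a) ∩ D)
        - pc μ (Fev b₁ ∩ (Gev b₁)ᶜ) D) * pc μ R D := by
    rw [hRSf, ← hins, RS_insert, pc_chain, pc_chain,
      Set.inter_assoc (Fev a ∩ Gev a) D (Imp b₁)]
    have h2 : pc μ (Imp b₁) ((Fev a ∩ Gev a) ∩ D) = pc μ (Imp b₁) D -
        (pc μ (Fev b₁ ∩ (Gev b₁)ᶜ) ((Fev a ∩ Gev a) ∩ D)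
          - pc μ (Fev b₁ ∩ (Gev b₁)ᶜ) D) := by
      rw [Imp_eq_compl, pc_compl μ hmFGD, pc_compl μ hmD]
      ring
    have hra0 : 0 ≤ pc μ (Imp b₁) ((Fev a ∩ Gev a) ∩ D) := pc_nonneg μ _ _
    have hq0 : 0 ≤ pc μ (RS S') (D ∩ Imp b₁) := pc_nonneg μ _ _
    have hr1 : pc μ (Imp b₁) D ≤ 1 := pc_le_one μ _ _
    have s1 := mul_le_mul_of_nonneg_right hclaim hra0
    have s2 : pc μ (RS S') (D ∩ Imp b₁) * pc μ (Imp b₁) D ≤ pc μ (RS S') (D ∩ Imp b₁) :=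
      mul_le_of_le_one_right hq0 hr1
    have s3 := mul_le_mul_of_nonneg_left s2 hδpos.le
    have s4 : pc μ (RS S') (D ∩ Imp b₁) * pc μ (Imp b₁) ((Fev a ∩ Gev a) ∩ D) =
        pc μ (RS S') (D ∩ Imp b₁) * pc μ (Imp b₁) D -
        (pc μ (Fev b₁ ∩ (Gev b₁)ᶜ) ((Fev a ∩ Gev a) ∩ D)
          - pc μ (Fev b₁ ∩ (Gev b₁)ᶜ) D) * pc μ (RS S') (D ∩ Imp b₁) := by
      rw [h2]; ring
    linarith
  -- identify Hyp with R on the two backgrounds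
  have hHL : ((Fev a ∩ Gev a) ∩ D) ∩ Hyp N = ((Fev a ∩ Gev a) ∩ D) ∩ R := by
    ext ω
    constructor
    · rintro ⟨hω, hH⟩
      exact ⟨hω, fun b hbT hba => hH b⟩
    · rintro ⟨hω, hRω⟩
      refine ⟨hω, fun b hb => ?_⟩
      by_cases hbT : b ∈ T
      · have hωb : ω b = d b := hω.2 b hbT
        by_contra h2
        have h2' : (ω b).2 = false := by
          cases h : (ω b).2
          · rfl
          · exact absurd h h2
        exact hd b hbT (by rw [← hωb]; exact Prod.ext hb h2')
      · rcases eq_or_ne b a with rfl | hba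
        · exact hω.1.2
        · exact hRω b hbT hba hb
  have hHR : D ∩ Hyp N = D ∩ (R ∩ Imp a) := by
    ext ω
    constructor
    · rintro ⟨hω, hH⟩
      exact ⟨hω, fun b hbT hba => hH b, fun h => hH a h⟩
    · rintro ⟨hω, hRω, hIa⟩
      refine ⟨hω, fun b hb => ?_⟩
      by_cases hbT : b ∈ T
      · have hωb : ω b = d b := hω b hbT
        by_contra h2
        have h2' : (ω b).2 = false := by
          cases h : (ω b).2
          · rfl
          · exact absurd h h2
        exact hd b hbT (by rw [← hωb]; exact Prod.ext hb h2')
      · rcases eq_or_ne b a with rfl | hba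
        · exact hIa hb
        · exact hRω b hbT hba hb
  have hDR : μ (D ∩ R) ≠ 0 := by
    refine hCournot _ ⟨fun c => if c ∈ T then d c else (false, false), ?_, ?_⟩
    · intro c hc
      simp only [if_pos hc]
    · intro b hbT hba hb
      simp only [if_neg hbT] at hb
      exact absurd hb (by simp)
  -- put everything together
  rw [← ENNReal.toReal_le_toReal (cond_ne_top μ _ _) (cond_ne_top μ _ _),
    cond_toReal, cond_toReal]
  have hLHS : pc μ (Hyp N) ((Fev a ∩ Gev a) ∩ D) = pc μ R ((Fev a ∩ Gev a) ∩ D) := by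
    unfold NicodAux.pc
    rw [hHL]
  have hRHS : pc μ (Hyp N) D = pc μ (R ∩ Imp a) D := by
    unfold NicodAux.pc
    rw [hHR]
  rw [hLHS, hRHS, pc_chain, Imp_eq_compl, pc_compl μ hDR, Set.inter_comm D R]
  have h5 := mul_le_mul_of_nonneg_right hyp2'.le (pc_nonneg μ R D)
  have h6 : 0 ≤ pc μ R D := pc_nonneg μ R D
  nlinarith [key, h5]
end

section
/- Assume the probability measure pr is exchangeable (invariant under permutations of individuals). Then for any individual a ∈ U and 1 ≤ k ≤ N: pr(H | Exact(k,U,F) ∧ F_a ∧ G_a) = pr(H | F_1 ∧ ... ∧ F_k ∧ ¬F_{k+1} ∧ ... ∧ ¬F_N ∧ G_k). -/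
open MeasureTheory ProbabilityTheory

open MeasureTheory ProbabilityTheory

/-- The event `Z_{(C,F)}`: exactly the individuals in `C` satisfy `F`. -/
def Zev {N : ℕ} (C : Finset (Fin N)) : Set (CDV N) :=
  {ω | ∀ b : Fin N, ((ω b).1 = true ↔ b ∈ C)}

/-- The event `Exact(k, U, F)`: exactly `k` individuals of the universe satisfy `F`. -/
def ExactEv (N k : ℕ) : Set (CDV N) :=
  ⋃ C ∈ Finset.univ.powersetCard k, Zev (N := N) C

/-- Substitution of a permutation `π` into propositions, replacing each individual `b`
by `π b`: `ρ^π = permCDV π ⁻¹' ρ`. -/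
def permCDV {N : ℕ} (π : Equiv.Perm (Fin N)) : CDV N → CDV N :=
  fun ω b => ω (π b)

/-!
The conditioning event `Exact(k,U,F) ∧ F_a ∧ G_a` is the disjoint union, over the `k`-sets
`C ∋ a`, of the events `Z_C ∧ G_a`. A permutation carrying `C` onto `{1,…,k}` and `a` to `k`
maps `Z_C ∧ G_a` to `F_1 ∧ … ∧ F_k ∧ ¬F_{k+1} ∧ … ∧ ¬F_N ∧ G_k` and fixes `H`, so by
exchangeability `H` has the same conditional probability on every piece, hence on their union.
-/

open scoped ENNReal

theorem ProbabilityTheory.cond_biUnion_eq_of_forall_cond_eq {Ω ι : Type*} [MeasurableSpace Ω]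
    {μ : Measure Ω} [IsFiniteMeasure μ] {S : Finset ι} {s : ι → Set Ω} {A : Set Ω} {c : ℝ≥0∞}
    (hs : ∀ j ∈ S, MeasurableSet (s j)) (hA : MeasurableSet A)
    (hdisj : (S : Set ι).PairwiseDisjoint s) (hμ : μ (⋃ j ∈ S, s j) ≠ 0)
    (hc : ∀ j ∈ S, μ[A | s j] = c) :
    μ[A | ⋃ j ∈ S, s j] = c := by
  have hU : MeasurableSet (⋃ j ∈ S, s j) := Finset.measurableSet_biUnion S hs
  refine (ENNReal.mul_left_inj hμ (measure_ne_top μ _)).1 ?_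
  calc μ[A | ⋃ j ∈ S, s j] * μ (⋃ j ∈ S, s j)
      = μ (⋃ j ∈ S, s j ∩ A) := by rw [cond_mul_eq_inter hU, Set.iUnion₂_inter]
    _ = ∑ j ∈ S, μ[A | s j] * μ (s j) := by
      rw [measure_biUnion_finset (hdisj.mono fun _ => Set.inter_subset_left)
        fun j hj => (hs j hj).inter hA]
      exact Finset.sum_congr rfl fun j hj => (cond_mul_eq_inter (hs j hj) A μ).symm
    _ = c * μ (⋃ j ∈ S, s j) := by
      rw [Finset.sum_congr rfl fun j hj => by rw [hc j hj], ← Finset.mul_sum,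
        measure_biUnion_finset hdisj hs]

theorem Finset.map_swap_eq_self {α : Type*} [DecidableEq α] {s : Finset α} {x y : α}
    (hx : x ∈ s) (hy : y ∈ s) : s.map (Equiv.swap x y).toEmbedding = s := by
  ext c
  rw [Finset.mem_map_equiv, Equiv.symm_swap, Equiv.swap_apply_def]
  split_ifs with h₁ h₂ <;> simp_all

theorem Equiv.Perm.exists_map_finset_eq_of_apply_eq {α : Type*} [DecidableEq α]
    {s t : Finset α} (h : s.card = t.card) {a b : α} (ha : a ∈ s) (hb : b ∈ t) :
    ∃ π : Equiv.Perm α, s.map π.toEmbedding = t ∧ π a = b := by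
  obtain ⟨σ, hσ⟩ := Equiv.Perm.exists_map_finset_eq s t h
  have hσa : σ a ∈ t := hσ ▸ Finset.mem_map_of_mem _ ha
  refine ⟨σ.trans (Equiv.swap (σ a) b), ?_, by simp⟩
  rw [Equiv.trans_toEmbedding, ← Finset.map_map, hσ, Finset.map_swap_eq_self hσa hb]

section CDV

variable {N : ℕ}

def IsExchangeable (μ : Measure (CDV N)) : Prop :=
  ∀ (A B : Set (CDV N)) (π : Equiv.Perm (Fin N)),
    μ[A | B] = μ[permCDV π ⁻¹' A | permCDV π ⁻¹' B]

theorem permCDV_preimage_hyp (π : Equiv.Perm (Fin N)) : permCDV π ⁻¹' Hyp N = Hyp N := by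
  ext ω
  exact π.forall_congr_right (q := fun c => (ω c).1 = true → (ω c).2 = true)

theorem permCDV_preimage_gev (π : Equiv.Perm (Fin N)) (b : Fin N) :
    permCDV π ⁻¹' Gev b = Gev (π b) := rfl

theorem permCDV_preimage_zev (π : Equiv.Perm (Fin N)) (C : Finset (Fin N)) :
    permCDV π ⁻¹' Zev C = Zev (C.map π.toEmbedding) := by
  ext ω
  simp only [Set.mem_preimage, Zev, Set.mem_ofPred_eq, permCDV, Finset.mem_map_equiv]
  conv_rhs => rw [← π.forall_congr_right]
  simp only [Equiv.symm_apply_apply]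

open Function in
theorem pairwise_disjoint_zev : Pairwise (Disjoint on Zev (N := N)) := by
  intro C C' hne
  refine Set.disjoint_left.2 fun ω hC hC' => hne ?_
  ext b
  rw [← hC b, hC' b]

theorem exactEv_inter_fev_inter_gev (k : ℕ) (a : Fin N) :
    ExactEv N k ∩ (Fev a ∩ Gev a) =
      ⋃ C ∈ (Finset.univ.powersetCard k).filter (a ∈ ·), Zev C ∩ Gev a := by
  ext ω
  simp only [ExactEv, Set.mem_inter_iff, Set.mem_iUnion, Finset.mem_filter, exists_prop]
  constructor
  · rintro ⟨⟨C, hC, hωC⟩, hFa, hGa⟩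
    exact ⟨C, ⟨hC, (hωC a).1 hFa⟩, hωC, hGa⟩
  · rintro ⟨C, ⟨hC, haC⟩, hωC, hGa⟩
    exact ⟨⟨C, hC, hωC⟩, (hωC a).2 haC, hGa⟩

theorem IsExchangeable.cond_hyp_zev_inter_gev_eq {μ : Measure (CDV N)} (hμ : IsExchangeable μ)
    {C T : Finset (Fin N)} (hCT : C.card = T.card) {a i : Fin N} (ha : a ∈ C) (hi : i ∈ T) :
    μ[Hyp N | Zev C ∩ Gev a] = μ[Hyp N | Zev T ∩ Gev i] := by
  obtain ⟨π, hπC, hπa⟩ := Equiv.Perm.exists_map_finset_eq_of_apply_eq hCT ha hi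
  rw [hμ _ _ π, permCDV_preimage_hyp, Set.preimage_inter, permCDV_preimage_zev,
    permCDV_preimage_gev, hπC, hπa]

end CDV

theorem exact_to_list_FaGa_general {N k : ℕ}
    (μ : Measure (CDV N)) [IsProbabilityMeasure μ]
    -- exchangeability: pr(A | B) = pr(A^π | B^π)
    (hexch : ∀ (A B : Set (CDV N)) (π : Equiv.Perm (Fin N)),
      μ[A | B] = μ[permCDV π ⁻¹' A | permCDV π ⁻¹' B])
    (a : Fin N)
    (D : Set (CDV N)) (hD : D = {ω | ∀ b : Fin N, ((ω b).1 = true ↔ (b : ℕ) < k)})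
    (i : Fin N) (hi : (i : ℕ) = k - 1)
    -- the conditioning events have positive probability
    (h1 : μ (ExactEv N k ∩ (Fev a ∩ Gev a)) ≠ 0) :
    μ[Hyp N | ExactEv N k ∩ (Fev a ∩ Gev a)] = μ[Hyp N | D ∩ Gev i] := by
  let T : Finset (Fin N) := {b | (b : ℕ) < k}
  have hDT : D = Zev T := by
    subst hD
    ext ω
    simp [Zev, T]
  rw [exactEv_inter_fev_inter_gev] at h1 ⊢
  refine cond_biUnion_eq_of_forall_cond_eq (fun _ _ => .of_discrete) .of_discrete
    (Set.PairwiseDisjoint.mono (pairwise_disjoint_zev.set_pairwise _)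
      fun _ => Set.inter_subset_left) h1 ?_
  intro C hC
  obtain ⟨hCk, haC⟩ := Finset.mem_filter.1 hC
  have hk : 0 < k := Finset.mem_powersetCard.1 hCk |>.2 ▸ Finset.card_pos.2 ⟨a, haC⟩
  have hCT : C.card = T.card := by
    rw [Finset.mem_powersetCard.1 hCk |>.2, Fin.card_filter_val_lt]
    omega
  have hiT : i ∈ T := Finset.mem_filter.2 ⟨Finset.mem_univ _, by omega⟩
  rw [hDT]
  exact IsExchangeable.cond_hyp_zev_inter_gev_eq hexch hCT haC hiT

/-- for an exchangeable probability measure,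
`pr(H | Exact(k,U,F) ∧ F_a ∧ G_a) = pr(H | F_1 ∧ .. ∧ F_k ∧ ¬F_{k+1} ∧ .. ∧ ¬F_N ∧ G_k)`. -/
theorem exact_to_list_FaGa {N k : ℕ} (hk1 : 1 ≤ k) (hk2 : k ≤ N)
    (μ : Measure (CDV N)) [IsProbabilityMeasure μ]
    -- exchangeability: pr(A | B) = pr(A^π | B^π)
    (hexch : ∀ (A B : Set (CDV N)) (π : Equiv.Perm (Fin N)),
      μ[A | B] = μ[permCDV π ⁻¹' A | permCDV π ⁻¹' B])
    (a : Fin N)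
    (D : Set (CDV N)) (hD : D = {ω | ∀ b : Fin N, ((ω b).1 = true ↔ (b : ℕ) < k)})
    (i : Fin N) (hi : (i : ℕ) = k - 1)
    -- the conditioning events have positive probability
    (h1 : μ (ExactEv N k ∩ (Fev a ∩ Gev a)) ≠ 0) (h2 : μ (D ∩ Gev i) ≠ 0) :
    μ[Hyp N | ExactEv N k ∩ (Fev a ∩ Gev a)] = μ[Hyp N | D ∩ Gev i] :=
  exact_to_list_FaGa_general μ hexch a D hD i hi h1
end

section
/- Let Ω* be the disjoint union of sample spaces Ω_α, ..., Ω_β (one per possible universe size), and let PR be a probability measure on Ω*. Suppose (i) for every possible size υ with PR(Ω_υ) > 0 and all events ω, PR(ω | Ω_υ) equals the size-υ measure pr_υ(ω ∩ Ω_υ); (ii) the evidence E does not change the size distribution: PR(Ω_υ | ω_E ∩ ω_D) = PR(Ω_υ | ω_D) for all such υ; and (iii) for every possible size υ, pr_υ(ω_H | ω_E ∩ ω_D, within Ω_υ) > pr_υ(ω_H | ω_D, within Ω_υ). Then PR(ω_H | ω_E ∩ ω_D) > PR(ω_H | ω_D). -/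
open MeasureTheory ProbabilityTheory
open scoped ENNReal

/-- Proposition 1: if (i) conditioning the overall measure `PR` on the
event `Ω_υ` ("the universe has size `υ`") gives the size-`υ` measure `pr_υ`, (ii) the
evidence `E` does not change the distribution over universe sizes, and (iii) for every
possible size `υ`, the evidence confirms the hypothesis within `Ω_υ`, then the evidence
confirms the hypothesis relative to the unknown-size measure `PR`. -/
theorem confirmation_unknown_universe_size {Ωs : Type*} [MeasurableSpace Ωs]
    (PR : Measure Ωs) [IsProbabilityMeasure PR]
    (α β : ℕ) (Om : ℕ → Set Ωs) (hOmMeas : ∀ υ, MeasurableSet (Om υ))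
    -- the sample spaces for the various sizes are pairwise disjoint and exhaustive
    (hdisj : ∀ υ υ' : ℕ, υ ≠ υ' → Disjoint (Om υ) (Om υ'))
    (hcover : ⋃ υ ∈ Finset.Icc α β, Om υ = Set.univ)
    (prυ : ℕ → Measure Ωs) (hprυ : ∀ υ, IsProbabilityMeasure (prυ υ))
    (ωH ωE ωD : Set Ωs)
    (hHm : MeasurableSet ωH) (hEm : MeasurableSet ωE) (hDm : MeasurableSet ωD)
    (hED : PR (ωE ∩ ωD) ≠ 0) (hD : PR ωD ≠ 0)
    -- (i) conditioning on the size υ recovers the size-υ measure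
    (hi : ∀ υ ∈ Finset.Icc α β, PR (Om υ) ≠ 0 →
      ∀ ω : Set Ωs, PR[ω | Om υ] = prυ υ (ω ∩ Om υ))
    -- (ii) the evidence does not affect the distribution over universe sizes
    (hii : ∀ υ ∈ Finset.Icc α β, PR (Om υ) ≠ 0 →
      PR[Om υ | ωE ∩ ωD] = PR[Om υ | ωD])
    -- (iii) for every possible size, the evidence confirms the hypothesis within Ω_υ
    (hiii : ∀ υ ∈ Finset.Icc α β, PR (Om υ) ≠ 0 →
      (prυ υ)[ωH ∩ Om υ | (ωE ∩ ωD) ∩ Om υ] > (prυ υ)[ωH ∩ Om υ | ωD ∩ Om υ]) :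
    PR[ωH | ωE ∩ ωD] > PR[ωH | ωD] := by
  classical
  set I := Finset.Icc α β with hI
  -- decomposition of any measurable set over the Om's
  have hdecomp : ∀ s : Set Ωs, MeasurableSet s →
      PR s = ∑ υ ∈ I, PR (Om υ ∩ s) := by
    intro s hs
    have h1 : ⋃ υ ∈ I, Om υ ∩ s = s := by
      rw [← Set.iUnion₂_inter, hcover, Set.univ_inter]
    have h2 := measure_biUnion_finset (μ := PR) (s := I) (f := fun υ => Om υ ∩ s)
      (fun υ _ υ' _ hne => (hdisj υ υ' hne).mono Set.inter_subset_left Set.inter_subset_left)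
      (fun υ _ => (hOmMeas υ).inter hs)
    rw [h1] at h2
    exact h2
  have hEDm : MeasurableSet (ωE ∩ ωD) := hEm.inter hDm
  set T := PR (ωE ∩ ωD) with hT
  set T' := PR ωD with hT'
  have hTne : T ≠ ∞ := measure_ne_top _ _
  have hT'ne : T' ≠ ∞ := measure_ne_top _ _
  set t := T.toReal with ht
  set t' := T'.toReal with ht'
  have htpos : 0 < t := ENNReal.toReal_pos hED hTne
  have ht'pos : 0 < t' := ENNReal.toReal_pos hD hT'ne
  -- real per-υ quantities
  set x : ℕ → ℝ := fun υ => (PR (Om υ ∩ (ωE ∩ ωD))).toReal with hx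
  set y : ℕ → ℝ := fun υ => (PR (Om υ ∩ ((ωE ∩ ωD) ∩ ωH))).toReal with hy
  set x' : ℕ → ℝ := fun υ => (PR (Om υ ∩ ωD)).toReal with hx'
  set y' : ℕ → ℝ := fun υ => (PR (Om υ ∩ (ωD ∩ ωH))).toReal with hy'
  -- the key per-υ strict inequality, for possible sizes
  have key : ∀ υ ∈ I, PR (Om υ) ≠ 0 → y' υ * t < y υ * t' := by
    intro υ hυ hc0
    set c := PR (Om υ) with hc
    have hct : c ≠ ∞ := measure_ne_top _ _
    -- condition (i) in explicit form
    have hi' : ∀ ω : Set Ωs, prυ υ (ω ∩ Om υ) = c⁻¹ * PR (Om υ ∩ ω) := by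
      intro ω
      rw [← hi υ hυ hc0 ω, cond_apply (hOmMeas υ) PR ω]
    -- rewrite hiii
    have ha := hiii υ hυ hc0
    rw [cond_apply (hEDm.inter (hOmMeas υ)) (prυ υ) (ωH ∩ Om υ),
        cond_apply (hDm.inter (hOmMeas υ)) (prυ υ) (ωH ∩ Om υ)] at ha
    have hset1 : ((ωE ∩ ωD) ∩ Om υ) ∩ (ωH ∩ Om υ) = ((ωE ∩ ωD) ∩ ωH) ∩ Om υ := by
      ext z; simp only [Set.mem_inter_iff]; tauto
    have hset2 : (ωD ∩ Om υ) ∩ (ωH ∩ Om υ) = (ωD ∩ ωH) ∩ Om υ := by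
      ext z; simp only [Set.mem_inter_iff]; tauto
    rw [hset1, hset2, hi' (ωE ∩ ωD), hi' ωD, hi' ((ωE ∩ ωD) ∩ ωH), hi' (ωD ∩ ωH)] at ha
    -- simplify the c's away
    have hsimp : ∀ U V : ℝ≥0∞, V ≠ ∞ → (c⁻¹ * V)⁻¹ * (c⁻¹ * U) = V⁻¹ * U := by
      intro U V hVt
      rw [ENNReal.mul_inv (Or.inl (ENNReal.inv_ne_zero.mpr hct))
        (Or.inl (ENNReal.inv_ne_top.mpr hc0)), inv_inv]
      calc c * V⁻¹ * (c⁻¹ * U) = (c * c⁻¹) * (V⁻¹ * U) := by ring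
        _ = V⁻¹ * U := by rw [ENNReal.mul_inv_cancel hc0 hct, one_mul]
    rw [hsimp _ _ (measure_ne_top _ _), hsimp _ _ (measure_ne_top _ _)] at ha
    set X := PR (Om υ ∩ (ωE ∩ ωD)) with hX
    set Y := PR (Om υ ∩ ((ωE ∩ ωD) ∩ ωH)) with hY
    set X' := PR (Om υ ∩ ωD) with hX'
    set Y' := PR (Om υ ∩ (ωD ∩ ωH)) with hY'
    -- X ≠ 0
    have hX0 : X ≠ 0 := by
      intro h0
      have hY0 : Y = 0 := by
        refine measure_mono_null ?_ h0
        exact Set.inter_subset_inter_right _ Set.inter_subset_left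
      rw [h0, hY0, mul_zero] at ha
      exact absurd ha (by simp)
    have haTop : X⁻¹ * Y ≠ ∞ :=
      ENNReal.mul_ne_top (ENNReal.inv_ne_top.mpr hX0) (measure_ne_top _ _)
    -- condition (ii) in real form
    have hb := hii υ hυ hc0
    rw [cond_apply hEDm PR (Om υ), cond_apply hDm PR (Om υ),
        Set.inter_comm (ωE ∩ ωD) (Om υ), Set.inter_comm ωD (Om υ)] at hb
    have hbre : t⁻¹ * x υ = t'⁻¹ * x' υ := by
      have := congrArg ENNReal.toReal hb
      simpa [ENNReal.toReal_mul, ENNReal.toReal_inv, hx, hx', ht, ht'] using this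
    have hxx' : x υ * t' = x' υ * t := by
      have h1 : x υ / t = x' υ / t' := by
        rw [div_eq_inv_mul, div_eq_inv_mul]; exact hbre
      exact (div_eq_div_iff htpos.ne' ht'pos.ne').mp h1
    -- hiii in real form
    have hare : y' υ / x' υ < y υ / x υ := by
      have h2 : (X'⁻¹ * Y').toReal < (X⁻¹ * Y).toReal :=
        ENNReal.toReal_strict_mono haTop ha
      simpa [ENNReal.toReal_mul, ENNReal.toReal_inv, hx, hy, hx', hy',
        div_eq_inv_mul] using h2
    have hxpos : 0 < x υ := ENNReal.toReal_pos hX0 (measure_ne_top _ _)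
    have hx'pos : 0 < x' υ := by nlinarith [mul_pos hxpos ht'pos]
    have hmul : y' υ * x υ < y υ * x' υ := (div_lt_div_iff₀ hx'pos hxpos).mp hare
    have h3 : (y' υ * t) * x υ < (y υ * t') * x υ := by
      calc (y' υ * t) * x υ = y' υ * x υ * t := by ring
        _ < y υ * x' υ * t := mul_lt_mul_of_pos_right hmul htpos
        _ = y υ * (x' υ * t) := by ring
        _ = y υ * (x υ * t') := by rw [← hxx']
        _ = (y υ * t') * x υ := by ring
    exact lt_of_mul_lt_mul_right h3 hxpos.le
  -- reduce the goal to real numbers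
  rw [cond_apply hEDm PR ωH, cond_apply hDm PR ωH]
  have hgoal_ne1 : T'⁻¹ * PR (ωD ∩ ωH) ≠ ∞ :=
    ENNReal.mul_ne_top (ENNReal.inv_ne_top.mpr hD) (measure_ne_top _ _)
  have hgoal_ne2 : T⁻¹ * PR ((ωE ∩ ωD) ∩ ωH) ≠ ∞ :=
    ENNReal.mul_ne_top (ENNReal.inv_ne_top.mpr hED) (measure_ne_top _ _)
  rw [← hT, ← hT', gt_iff_lt, ← ENNReal.toReal_lt_toReal hgoal_ne1 hgoal_ne2]
  rw [ENNReal.toReal_mul, ENNReal.toReal_mul, ENNReal.toReal_inv, ENNReal.toReal_inv]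
  rw [← ht, ← ht', inv_mul_eq_div, inv_mul_eq_div]
  rw [div_lt_div_iff₀ ht'pos htpos]
  -- decompose the numerators
  have hdE : (PR ((ωE ∩ ωD) ∩ ωH)).toReal = ∑ υ ∈ I, y υ := by
    rw [hdecomp _ (hEDm.inter hHm), ENNReal.toReal_sum (fun υ _ => measure_ne_top _ _)]
  have hdD : (PR (ωD ∩ ωH)).toReal = ∑ υ ∈ I, y' υ := by
    rw [hdecomp _ (hDm.inter hHm), ENNReal.toReal_sum (fun υ _ => measure_ne_top _ _)]
  rw [hdE, hdD, Finset.sum_mul, Finset.sum_mul]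
  -- find a υ₀ with PR (Om υ₀ ∩ (ωE ∩ ωD)) ≠ 0
  have hsum : T = ∑ υ ∈ I, PR (Om υ ∩ (ωE ∩ ωD)) := hdecomp _ hEDm
  obtain ⟨υ₀, hυ₀I, hυ₀ne⟩ : ∃ υ₀ ∈ I, PR (Om υ₀ ∩ (ωE ∩ ωD)) ≠ 0 := by
    by_contra hcon
    push_neg at hcon
    rw [hsum] at hED
    exact hED (Finset.sum_eq_zero hcon)
  have hυ₀Om : PR (Om υ₀) ≠ 0 := fun h0 =>
    hυ₀ne (measure_mono_null Set.inter_subset_left h0)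
  refine Finset.sum_lt_sum ?_ ⟨υ₀, hυ₀I, key υ₀ hυ₀I hυ₀Om⟩
  intro υ hυ
  by_cases hc0 : PR (Om υ) = 0
  · have hy0 : y υ = 0 := by
      simp [hy, measure_mono_null Set.inter_subset_left hc0]
    have hy'0 : y' υ = 0 := by
      simp [hy', measure_mono_null Set.inter_subset_left hc0]
    simp [hy0, hy'0]
  · exact (key υ hυ hc0).le
end
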